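/- arXiv:1410.5477 — 7 statements merged into one kernel-verified Lean document; each statement's English description precedes it below -/
import Mathlib

section
/- Let x^{k+1} = prox_{α g}(x^k - α u^k) with u^k ∈ ∂f(x^k) and α > 0. Then for every x ∈ dom(g) and every w^k ∈ ∂g(x^k), one has ‖x^{k+1} - x‖² ≤ ‖x^k - x‖² + 2α[(f+g)(x) - (f+g)(x^k)] + α²‖u^k + w^k‖². -/
open Filter Metric Finset Bornology
open scoped RealInnerProductSpace Topology

/-- `w` is a subgradient of `h` at `x`, where `s` is the effective domain of `h`
(the extended-valued function equals `h` on `s` and `+∞` outside). -/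
def HasSubgradAt {H : Type*} [NormedAddCommGroup H] [InnerProductSpace ℝ H]
    (s : Set H) (h : H → ℝ) (w x : H) : Prop :=
  ∀ y ∈ s, h x + (inner ℝ w (y - x) : ℝ) ≤ h y

/-- `p` is the proximal point `prox_{αg}(z)`, i.e. a minimizer over the domain `s` of
`y ↦ g y + (1/(2α)) ‖y - z‖²`. -/
def IsProxPt {H : Type*} [NormedAddCommGroup H] [InnerProductSpace ℝ H]
    (s : Set H) (g : H → ℝ) (α : ℝ) (z p : H) : Prop :=
  p ∈ s ∧ ∀ y ∈ s, g p + (1/(2*α)) * ‖p - z‖^2 ≤ g y + (1/(2*α)) * ‖y - z‖^2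

/-- Solution set of `min (f+g)` over the domain `s` of `g`. -/
def SolSet {H : Type*} [NormedAddCommGroup H] (s : Set H) (f g : H → ℝ) : Set H :=
  {z ∈ s | ∀ y ∈ s, f z + g z ≤ f y + g y}

/-!
The prox objective `y ↦ g y + ‖y - z‖² / (2α)` is `1/α`-strongly convex, so its minimizer
`p = x^{k+1}` satisfies the three-point inequality
`2α g p + ‖p - z‖² + ‖x - p‖² ≤ 2α g x + ‖x - z‖²`, here with `z = x^k - α u^k`.
Expanding both squares around `x^k` and using the subgradient inequalities of `u^k` at `x`
and of `w^k` at `p`, what remains beyond the claimed bound is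
`-‖d‖² - 2α ⟪u^k + w^k, d⟫` with `d = p - x^k`, which is at most `α² ‖u^k + w^k‖²`
by completing the square.
-/

section

variable {E : Type*} [NormedAddCommGroup E] [InnerProductSpace ℝ E] {s : Set E} {m : ℝ}

lemma StrongConvexOn.add_sq_norm_sub_le_of_isMinOn {f : E → ℝ} {p y : E}
    (hf : StrongConvexOn s m f) (hmin : IsMinOn f s p) (hp : p ∈ s) (hy : y ∈ s) :
    f p + m / 2 * ‖y - p‖ ^ 2 ≤ f y := by
  have hseg : ∀ t ∈ Set.Ioo (0 : ℝ) 1, (1 - t) * (m / 2 * ‖y - p‖ ^ 2) ≤ f y - f p := by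
    rintro t ⟨ht0, ht1⟩
    have hmem := hf.1 hp hy (sub_nonneg.2 ht1.le) ht0.le (sub_add_cancel 1 t)
    have hconv := hf.2 hp hy (sub_nonneg.2 ht1.le) ht0.le (sub_add_cancel 1 t)
    have hle : f p ≤ f ((1 - t) • p + t • y) := hmin hmem
    rw [norm_sub_rev] at hconv
    simp only [smul_eq_mul] at hconv
    exact le_of_mul_le_mul_left (by linear_combination hle + hconv) ht0
  have hlim : Tendsto (fun t : ℝ ↦ (1 - t) * (m / 2 * ‖y - p‖ ^ 2)) (𝓝[>] 0)
      (𝓝 (m / 2 * ‖y - p‖ ^ 2)) :=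
    tendsto_nhdsWithin_of_tendsto_nhds <|
      ((continuous_const.sub continuous_id).mul continuous_const).tendsto' 0 _ (by simp)
  linarith [le_of_tendsto hlim (eventually_of_mem (Ioo_mem_nhdsGT one_pos) hseg)]

lemma ConvexOn.strongConvexOn_add_sq_norm_sub {g : E → ℝ} (hg : ConvexOn ℝ s g) (z : E) :
    StrongConvexOn s m fun y ↦ g y + m / 2 * ‖y - z‖ ^ 2 := by
  have haff : (fun y ↦ g y + m / 2 * ‖y - z‖ ^ 2 - m / 2 * ‖y‖ ^ 2)
      = fun y ↦ g y + (m / 2 * ‖z‖ ^ 2 - (m • innerSL ℝ z) y) := by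
    ext y
    rw [norm_sub_sq_real, smul_apply, innerSL_apply_apply, real_inner_comm, smul_eq_mul]
    ring
  rw [strongConvexOn_iff_convex, haff]
  exact hg.add ((convexOn_const _ hg.1).sub ((m • innerSL ℝ z).toLinearMap.concaveOn hg.1))

lemma norm_add_smul_sq_real (a v : E) (c : ℝ) :
    ‖a + c • v‖ ^ 2 = ‖a‖ ^ 2 + 2 * c * ⟪v, a⟫ + c ^ 2 * ‖v‖ ^ 2 := by
  rw [norm_add_sq_real, norm_smul, real_inner_smul_right, real_inner_comm, mul_pow,
    Real.norm_eq_abs, sq_abs]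
  ring

lemma IsProxPt.three_point {g : E → ℝ} {α : ℝ} {z p y : E} (hp : IsProxPt s g α z p)
    (hg : ConvexOn ℝ s g) (hα : 0 < α) (hy : y ∈ s) :
    2 * α * g p + ‖p - z‖ ^ 2 + ‖y - p‖ ^ 2 ≤ 2 * α * g y + ‖y - z‖ ^ 2 := by
  have hm : 1 / α / 2 = 1 / (2 * α) := by ring
  have hconv := hg.strongConvexOn_add_sq_norm_sub (m := 1 / α) z
  rw [hm] at hconv
  have hmin := hconv.add_sq_norm_sub_le_of_isMinOn hp.2 hp.1 hy
  rw [hm] at hmin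
  have hscale : 2 * α * (1 / (2 * α)) = 1 := by field_simp
  linear_combination (2 * α) * hmin - (‖p - z‖ ^ 2 + ‖y - p‖ ^ 2 - ‖y - z‖ ^ 2) * hscale

end

theorem pss_fundamental_one_step_inequality_general
    {H : Type*} [NormedAddCommGroup H] [InnerProductSpace ℝ H]
    (sf sg : Set H) (f g : H → ℝ)
    (hconvg : ConvexOn ℝ sg g)
    (hdom : sg ⊆ sf)
    (α : ℝ) (hα : 0 < α) (xk xk1 u w : H)
    (hu : HasSubgradAt sf f u xk) (hw : HasSubgradAt sg g w xk)
    (hstep : IsProxPt sg g α (xk - α • u) xk1) :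
    ∀ xx ∈ sg,
      ‖xk1 - xx‖^2 ≤ ‖xk - xx‖^2 + 2*α*((f xx + g xx) - (f xk + g xk))
        + α^2 * ‖u + w‖^2 := by
  intro xx hxx
  have hprox := hstep.three_point hconvg hα hxx
  have hexpand : ∀ y, ‖y - (xk - α • u)‖ ^ 2
      = ‖y - xk‖ ^ 2 + 2 * α * ⟪u, y - xk⟫ + α ^ 2 * ‖u‖ ^ 2 := fun y ↦ by
    rw [sub_sub_eq_add_sub, add_sub_right_comm, norm_add_smul_sq_real]
  rw [hexpand, hexpand, norm_sub_rev xx xk1] at hprox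
  have hf := hu xx (hdom hxx)
  have hg := hw xk1 hstep.1
  have hsq : 0 ≤ ‖xk1 - xk + α • (u + w)‖ ^ 2 := sq_nonneg _
  rw [norm_add_smul_sq_real, inner_add_left] at hsq
  rw [norm_sub_rev xk xx]
  linear_combination hprox + (2 * α) * hf + (2 * α) * hg + hsq

theorem pss_fundamental_one_step_inequality
    {H : Type*} [NormedAddCommGroup H] [InnerProductSpace ℝ H] [CompleteSpace H]
    (sf sg : Set H) (f g : H → ℝ)
    (hconvf : ConvexOn ℝ sf f) (hconvg : ConvexOn ℝ sg g)
    (hlscf : LowerSemicontinuousOn f sf) (hlscg : LowerSemicontinuousOn g sg)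
    (hclg : IsClosed sg) (hdom : sg ⊆ sf) (hneg : sg.Nonempty)
    (α : ℝ) (hα : 0 < α) (xk xk1 u w : H) (hxk : xk ∈ sg)
    (hu : HasSubgradAt sf f u xk) (hw : HasSubgradAt sg g w xk)
    (hstep : IsProxPt sg g α (xk - α • u) xk1) :
    ∀ xx ∈ sg,
      ‖xk1 - xx‖^2 ≤ ‖xk - xx‖^2 + 2*α*((f xx + g xx) - (f xk + g xk))
        + α^2 * ‖u + w‖^2 :=
  pss_fundamental_one_step_inequality_general sf sg f g hconvg hdom α hα xk xk1 u w hu hw hstep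
end

section
/- Let (x^k) be generated by the proximal subgradient splitting iteration x^{k+1} = prox_{α_k g}(x^k - α_k u^k), u^k ∈ ∂f(x^k), with α_k > 0. If the solution set S* of min (f+g) is nonempty and x* is the projection of x^0 onto S*, then for all k, the best value (f+g)^k_best := min_{0≤i≤k} (f+g)(x^i) satisfies (f+g)^k_best - min(f+g) ≤ (dist(x^0, S*)² + C_k · Σ_{i=0}^k α_i²) / (2 Σ_{i=0}^k α_i), where C_k := max_{0≤i≤k} ‖u^i + w^i‖² for any choices w^i ∈ ∂g(x^i). -/
/-!
Each step is a Fejér-type estimate: for every `z` in the domain,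
`‖x^{k+1} - z‖² ≤ ‖x^k - z‖² - 2 α_k ((f+g)(x^k) - (f+g)(z)) + α_k² ‖u^k + w^k‖²`.
It comes from the variational inequality characterising the proximal point, the subgradient
inequalities for `u^k` (at `z`) and `w^k` (at `x^{k+1}`), and `‖(x^{k+1} - x^k) + α_k (u^k + w^k)‖² ≥ 0`.
Telescoping, bounding each value by the best one and each `‖u^i + w^i‖²` by `C_k`, and taking
the infimum over `z ∈ S*` gives the bound.
-/

open Filter Metric Finset Bornology
open scoped RealInnerProductSpace Topology

lemma nonneg_of_forall_nonneg_add_mul {A B : ℝ} (h : ∀ t ∈ Set.Ioc (0 : ℝ) 1, 0 ≤ A + t * B) :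
    0 ≤ A := by
  have hlim : Tendsto (fun t : ℝ => A + t * B) (𝓝[>] 0) (𝓝 A) := by
    have hcont : Continuous fun t : ℝ => A + t * B := by fun_prop
    simpa using (hcont.tendsto 0).mono_left nhdsWithin_le_nhds
  exact ge_of_tendsto hlim (eventually_of_mem (Ioc_mem_nhdsGT one_pos) h)

lemma sum_range_le_of_forall_succ_le {r a b : ℕ → ℝ} (h : ∀ i, r (i + 1) + a i ≤ r i + b i)
    (n : ℕ) : r n + ∑ i ∈ range n, a i ≤ r 0 + ∑ i ∈ range n, b i := by
  have hsum : ∑ i ∈ range n, (a i - b i) ≤ ∑ i ∈ range n, (r i - r (i + 1)) :=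
    sum_le_sum fun i _ => by linarith [h i]
  rw [sum_sub_distrib, sum_range_sub'] at hsum
  linarith

lemma Metric.le_infDist_sq {X : Type*} [PseudoMetricSpace X] {x : X} {s : Set X} {K : ℝ}
    (hs : s.Nonempty) (h : ∀ z ∈ s, K ≤ dist x z ^ 2) : K ≤ infDist x s ^ 2 :=
  (Real.sqrt_le_iff.1 <| (le_infDist hs).2 fun z hz =>
    Real.sqrt_le_iff.2 ⟨dist_nonneg, h z hz⟩).2

lemma SolSet.value_eq {H : Type*} [NormedAddCommGroup H] {s : Set H} {f g : H → ℝ} {z z' : H}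
    (hz : z ∈ SolSet s f g) (hz' : z' ∈ SolSet s f g) : f z + g z = f z' + g z' :=
  le_antisymm (hz.2 z' hz'.1) (hz'.2 z hz.1)

section ProximalSubgradient

variable {H : Type*} [NormedAddCommGroup H] [InnerProductSpace ℝ H]

lemma IsProxPt.two_mul_add_sq_le {s : Set H} {g : H → ℝ} {α : ℝ} {z p y : H} (hα : 0 < α)
    (hp : IsProxPt s g α z p) (hy : y ∈ s) :
    2 * α * g p + ‖p - z‖ ^ 2 ≤ 2 * α * g y + ‖y - z‖ ^ 2 := by
  have h := mul_le_mul_of_nonneg_left (hp.2 y hy) (by positivity : (0 : ℝ) ≤ 2 * α)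
  have hc : 2 * α * (1 / (2 * α)) = 1 := by field_simp
  rwa [mul_add, mul_add, ← mul_assoc, hc, one_mul, ← mul_assoc, hc, one_mul] at h

lemma IsProxPt.inner_sub_le {s : Set H} {g : H → ℝ} {α : ℝ} {z p y : H} (hg : ConvexOn ℝ s g)
    (hα : 0 < α) (hp : IsProxPt s g α z p) (hy : y ∈ s) :
    ⟪z - p, y - p⟫ ≤ α * (g y - g p) := by
  suffices h : 0 ≤ 2 * (α * (g y - g p) - ⟪z - p, y - p⟫) by linarith
  refine nonneg_of_forall_nonneg_add_mul (B := ‖y - p‖ ^ 2) fun t ht => ?_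
  have hmem : p + t • (y - p) ∈ s := hg.1.add_smul_sub_mem hp.1 hy (Set.Ioc_subset_Icc_self ht)
  have hconv : g (p + t • (y - p)) ≤ g p + t * (g y - g p) := by
    have h := hg.2 hp.1 hy (sub_nonneg.2 ht.2) ht.1.le (sub_add_cancel 1 t)
    rw [show (1 - t) • p + t • y = p + t • (y - p) by module, smul_eq_mul, smul_eq_mul] at h
    linarith
  have hexp : ‖p + t • (y - p) - z‖ ^ 2
      = ‖p - z‖ ^ 2 - 2 * t * ⟪z - p, y - p⟫ + t ^ 2 * ‖y - p‖ ^ 2 := by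
    rw [show p + t • (y - p) - z = t • (y - p) - (z - p) by module, norm_sub_sq_real,
      norm_smul, real_inner_smul_left, mul_pow, Real.norm_eq_abs, sq_abs, real_inner_comm,
      norm_sub_rev z p]
    ring
  have hmin := hp.two_mul_add_sq_le hα hmem
  rw [← mul_nonneg_iff_of_pos_left ht.1]
  linarith [mul_le_mul_of_nonneg_left hconv (by positivity : (0 : ℝ) ≤ 2 * α)]

lemma IsProxPt.norm_sub_sq_add_le {sf sg : Set H} {f g : H → ℝ} (hg : ConvexOn ℝ sg g)
    {a : ℝ} (ha : 0 < a) {x u w p z : H} (hp : IsProxPt sg g a (x - a • u) p)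
    (hu : HasSubgradAt sf f u x) (hw : HasSubgradAt sg g w x) (hzf : z ∈ sf) (hzg : z ∈ sg) :
    ‖p - z‖ ^ 2 + 2 * a * (f x + g x - (f z + g z)) ≤ ‖x - z‖ ^ 2 + a ^ 2 * ‖u + w‖ ^ 2 := by
  have hvar := hp.inner_sub_le hg ha hzg
  have hfz := hu z hzf
  have hgp := hw p hp.1
  set d := p - x
  set e := z - x
  have hsq : ‖d + a • (u + w)‖ ^ 2
      = ‖d‖ ^ 2 + 2 * a * ⟪u, d⟫ + 2 * a * ⟪w, d⟫ + a ^ 2 * ‖u + w‖ ^ 2 := by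
    rw [norm_add_sq_real, norm_smul, real_inner_smul_right, inner_add_right, real_inner_comm u,
      real_inner_comm w, mul_pow, Real.norm_eq_abs, sq_abs]
    ring
  have hvar' : ⟪x - a • u - p, z - p⟫ = ‖d‖ ^ 2 - ⟪d, e⟫ + a * ⟪u, d⟫ - a * ⟪u, e⟫ := by
    rw [show x - a • u - p = -(d + a • u) by module, show z - p = e - d by module, inner_neg_left,
      inner_add_left, real_inner_smul_left, inner_sub_right d e d, inner_sub_right u e d,
      real_inner_self_eq_norm_sq, real_inner_comm e d]
    ring
  have hpz : ‖p - z‖ ^ 2 = ‖d‖ ^ 2 - 2 * ⟪d, e⟫ + ‖x - z‖ ^ 2 := by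
    rw [show p - z = d - e by module, norm_sub_sq_real, show x - z = -e by module, norm_neg]
  rw [hvar'] at hvar
  linarith [mul_le_mul_of_nonneg_left hfz ha.le, mul_le_mul_of_nonneg_left hgp ha.le,
    sq_nonneg ‖d + a • (u + w)‖]

variable {sf sg : Set H} {f g : H → ℝ} {x u w : ℕ → H} {α : ℕ → ℝ}

lemma sum_two_mul_sub_le_of_isProxPt (hg : ConvexOn ℝ sg g) (hα : ∀ k, 0 < α k)
    (hu : ∀ k, HasSubgradAt sf f (u k) (x k)) (hw : ∀ k, HasSubgradAt sg g (w k) (x k))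
    (hstep : ∀ k, IsProxPt sg g (α k) (x k - α k • u k) (x (k + 1)))
    {z : H} (hzf : z ∈ sf) (hzg : z ∈ sg) (n : ℕ) :
    ∑ i ∈ range n, 2 * α i * (f (x i) + g (x i) - (f z + g z))
      ≤ ‖x 0 - z‖ ^ 2 + ∑ i ∈ range n, α i ^ 2 * ‖u i + w i‖ ^ 2 := by
  have h := sum_range_le_of_forall_succ_le (r := fun i => ‖x i - z‖ ^ 2)
    (fun i => (hstep i).norm_sub_sq_add_le hg (hα i) (hu i) (hw i) hzf hzg) n
  linarith [sq_nonneg ‖x n - z‖]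

lemma inf'_sub_mul_two_mul_sum_le_of_isProxPt (hg : ConvexOn ℝ sg g) (hα : ∀ k, 0 < α k)
    (hu : ∀ k, HasSubgradAt sf f (u k) (x k)) (hw : ∀ k, HasSubgradAt sg g (w k) (x k))
    (hstep : ∀ k, IsProxPt sg g (α k) (x k - α k • u k) (x (k + 1)))
    {z : H} (hzf : z ∈ sf) (hzg : z ∈ sg) (k : ℕ) :
    ((range (k + 1)).inf' nonempty_range_add_one (fun i => f (x i) + g (x i)) - (f z + g z))
        * (2 * ∑ i ∈ range (k + 1), α i)
      ≤ ‖x 0 - z‖ ^ 2 + (range (k + 1)).sup' nonempty_range_add_one (fun i => ‖u i + w i‖ ^ 2)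
          * ∑ i ∈ range (k + 1), α i ^ 2 := by
  set best := (range (k + 1)).inf' nonempty_range_add_one (fun i => f (x i) + g (x i))
  set C := (range (k + 1)).sup' nonempty_range_add_one (fun i => ‖u i + w i‖ ^ 2)
  calc (best - (f z + g z)) * (2 * ∑ i ∈ range (k + 1), α i)
      = ∑ i ∈ range (k + 1), 2 * α i * (best - (f z + g z)) := by
        rw [mul_comm, mul_sum, sum_mul]
    _ ≤ ∑ i ∈ range (k + 1), 2 * α i * (f (x i) + g (x i) - (f z + g z)) :=
        sum_le_sum fun i hi => mul_le_mul_of_nonneg_left (sub_le_sub_right (inf'_le _ hi) _)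
          (by linarith [hα i])
    _ ≤ ‖x 0 - z‖ ^ 2 + ∑ i ∈ range (k + 1), α i ^ 2 * ‖u i + w i‖ ^ 2 :=
        sum_two_mul_sub_le_of_isProxPt hg hα hu hw hstep hzf hzg (k + 1)
    _ ≤ ‖x 0 - z‖ ^ 2 + C * ∑ i ∈ range (k + 1), α i ^ 2 := by
        rw [mul_sum]
        gcongr ‖x 0 - z‖ ^ 2 + ?_
        refine sum_le_sum fun i hi => ?_
        rw [mul_comm]
        exact mul_le_mul_of_nonneg_right (le_sup' (fun j => ‖u j + w j‖ ^ 2) hi) (sq_nonneg _)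

end ProximalSubgradient

theorem pss_best_value_complexity
    {H : Type*} [NormedAddCommGroup H] [InnerProductSpace ℝ H]
    (sf sg : Set H) (f g : H → ℝ)
    (hconvg : ConvexOn ℝ sg g)
    (hdom : sg ⊆ sf)
    (x u w : ℕ → H) (α : ℕ → ℝ) (hα : ∀ k, 0 < α k)
    (hu : ∀ k, HasSubgradAt sf f (u k) (x k))
    (hw : ∀ k, HasSubgradAt sg g (w k) (x k))
    (hstep : ∀ k, IsProxPt sg g (α k) (x k - α k • u k) (x (k+1)))
    (xstar : H) (hstar : xstar ∈ SolSet sg f g) (k : ℕ) :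
    (Finset.range (k+1)).inf' (by simp) (fun i => f (x i) + g (x i))
        - (f xstar + g xstar)
      ≤ ((Metric.infDist (x 0) (SolSet sg f g))^2
          + ((Finset.range (k+1)).sup' (by simp) (fun i => ‖u i + w i‖^2))
              * ∑ i ∈ Finset.range (k+1), (α i)^2)
        / (2 * ∑ i ∈ Finset.range (k+1), α i) := by
  have hsum : 0 < ∑ i ∈ range (k + 1), α i := sum_pos (fun i _ => hα i) nonempty_range_add_one
  rw [le_div_iff₀ (by positivity), ← sub_le_iff_le_add]
  refine Metric.le_infDist_sq ⟨xstar, hstar⟩ fun z hz => ?_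
  rw [sub_le_iff_le_add, dist_eq_norm, ← SolSet.value_eq hz hstar]
  exact inf'_sub_mul_two_mul_sum_le_of_isProxPt hconvg hα hu hw hstep (hdom hz.1) hz.1 k
end

section
/- Under the same iteration, the ergodic average x̄^k := (Σ_{i=0}^k α_i x^i)/(Σ_{i=0}^k α_i) satisfies (f+g)(x̄^k) - min(f+g) ≤ (dist(x^0, S*)² + C_k Σ_{i=0}^k α_i²)/(2 Σ_{i=0}^k α_i), where C_k := max_{0≤i≤k} ‖u^i + w^i‖² with arbitrary w^i ∈ ∂g(x^i). -/
open Filter Metric Finset Bornology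
open scoped RealInnerProductSpace Topology

/-!
The prox objective `y ↦ g y + ‖y - q‖² / (2α)` is strongly convex, so its minimizer satisfies
the three-point inequality. Together with the subgradient inequalities for `f` and `g` and
Young's inequality this gives, for every feasible `z`, the descent estimate
`‖x^{k+1} - z‖² ≤ ‖x^k - z‖² - 2α_k ((f+g)(x^k) - (f+g)(z)) + α_k² ‖u^k + w^k‖²`.
Telescoping bounds the weighted sum of the gaps, Jensen's inequality transfers it to the
ergodic average, and letting `z` range over the solution set turns `‖x^0 - z‖` into the distance.
-/

section StrongConvexity

variable {E : Type*} [NormedAddCommGroup E] [InnerProductSpace ℝ E] {s : Set E}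

theorem strongConvexOn_mul_norm_sub_sq (hs : Convex ℝ s) (c : ℝ) (q : E) :
    StrongConvexOn s (2 * c) fun x => c * ‖x - q‖ ^ 2 := by
  refine ⟨hs, fun x _ y _ a b ha hb hab => le_of_eq ?_⟩
  obtain rfl := eq_sub_of_add_eq hab
  have hsplit : (1 - b) • x + b • y - q = (1 - b) • (x - q) + b • (y - q) := by module
  have hdiff : x - y = (x - q) - (y - q) := by abel
  show c * ‖(1 - b) • x + b • y - q‖ ^ 2
    = (1 - b) * (c * ‖x - q‖ ^ 2) + b * (c * ‖y - q‖ ^ 2) - (1 - b) * b * (2 * c / 2 * ‖x - y‖ ^ 2)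
  rw [hsplit, hdiff, norm_add_sq_real, norm_sub_sq_real (x - q), norm_smul, norm_smul,
    real_inner_smul_left, real_inner_smul_right, Real.norm_of_nonneg ha, Real.norm_of_nonneg hb]
  ring

theorem ConvexOn.add_strongConvexOn {m : ℝ} {f g : E → ℝ} (hf : ConvexOn ℝ s f)
    (hg : StrongConvexOn s m g) : StrongConvexOn s m (f + g) :=
  (hf.uniformConvexOn_zero.add hg).mono fun r => by simp

theorem StrongConvexOn.add_norm_sub_sq_le_of_isMinOn {m : ℝ} {f : E → ℝ}
    (hf : StrongConvexOn s m f) {p y : E} (hmin : IsMinOn f s p) (hp : p ∈ s) (hy : y ∈ s) :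
    f p + m / 2 * ‖y - p‖ ^ 2 ≤ f y := by
  have hsegment : ∀ t ∈ Set.Ioc (0 : ℝ) 1, f p + (1 - t) * (m / 2 * ‖y - p‖ ^ 2) ≤ f y := by
    rintro t ⟨ht0, ht1⟩
    have hconv := hf.2 hy hp ht0.le (sub_nonneg.2 ht1) (add_sub_cancel t 1)
    have hle := isMinOn_iff.1 hmin _ (hf.1 hy hp ht0.le (sub_nonneg.2 ht1) (add_sub_cancel t 1))
    simp only [smul_eq_mul] at hconv
    refine le_of_mul_le_mul_left ?_ ht0
    linarith
  have hlim : Tendsto (fun t : ℝ => f p + (1 - t) * (m / 2 * ‖y - p‖ ^ 2)) (𝓝[>] 0)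
      (𝓝 (f p + m / 2 * ‖y - p‖ ^ 2)) := by
    refine tendsto_nhdsWithin_of_tendsto_nhds ((?_ : Continuous _).tendsto' 0 _ (by simp))
    fun_prop
  exact le_of_tendsto hlim (eventually_of_mem (Ioc_mem_nhdsGT one_pos) hsegment)

end StrongConvexity

section ProximalStep

variable {H : Type*} [NormedAddCommGroup H] [InnerProductSpace ℝ H]

theorem norm_add_smul_sq_real_s4 (x y : H) (t : ℝ) :
    ‖x + t • y‖ ^ 2 = ‖x‖ ^ 2 + 2 * t * ⟪x, y⟫ + t ^ 2 * ‖y‖ ^ 2 := by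
  rw [norm_add_sq_real, real_inner_smul_right, norm_smul, mul_pow, Real.norm_eq_abs, sq_abs]
  ring

theorem IsProxPt.two_mul_add_norm_sub_sq_le {s : Set H} {g : H → ℝ} (hg : ConvexOn ℝ s g)
    {α : ℝ} (hα : 0 < α) {q p y : H} (hp : IsProxPt s g α q p) (hy : y ∈ s) :
    2 * α * g p + ‖p - q‖ ^ 2 + ‖y - p‖ ^ 2 ≤ 2 * α * g y + ‖y - q‖ ^ 2 := by
  have hstrong := hg.add_strongConvexOn (strongConvexOn_mul_norm_sub_sq hg.1 (1 / (2 * α)) q)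
  have hgrowth := hstrong.add_norm_sub_sq_le_of_isMinOn (isMinOn_iff.2 hp.2) hp.1 hy
  simp only [Pi.add_apply] at hgrowth
  field_simp at hgrowth
  linarith

theorem IsProxPt.norm_sub_sq_le_of_hasSubgradAt {sf sg : Set H} {f g : H → ℝ}
    (hg : ConvexOn ℝ sg g) {α : ℝ} (hα : 0 < α) {a u w p z : H}
    (hu : HasSubgradAt sf f u a) (hw : HasSubgradAt sg g w a)
    (hp : IsProxPt sg g α (a - α • u) p) (hzf : z ∈ sf) (hzg : z ∈ sg) :
    ‖p - z‖ ^ 2 ≤ ‖a - z‖ ^ 2 - 2 * α * ((f a + g a) - (f z + g z)) + α ^ 2 * ‖u + w‖ ^ 2 := by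
  have hprox := hp.two_mul_add_norm_sub_sq_le hg hα hzg
  rw [show p - (a - α • u) = (p - a) + α • u by abel, show z - (a - α • u) = (z - a) + α • u by abel,
    norm_add_smul_sq_real_s4, norm_add_smul_sq_real_s4, norm_sub_rev z p, norm_sub_rev z a] at hprox
  have hfz := mul_le_mul_of_nonneg_left (hu z hzf) (by positivity : (0 : ℝ) ≤ 2 * α)
  have hgp := mul_le_mul_of_nonneg_left (hw p hp.1) (by positivity : (0 : ℝ) ≤ 2 * α)
  -- Young's inequality `-2α⟪u + w, p - a⟫ - ‖p - a‖² ≤ α²‖u + w‖²`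
  have hyoung : 0 ≤ ‖(p - a) + α • (u + w)‖ ^ 2 := sq_nonneg _
  rw [norm_add_smul_sq_real_s4, inner_add_right] at hyoung
  rw [real_inner_comm (z - a) u] at hfz
  rw [real_inner_comm (p - a) w] at hgp
  linarith

end ProximalStep

theorem two_mul_sum_le_of_descent {d e c α : ℕ → ℝ} {C : ℝ} {n : ℕ}
    (hdescent : ∀ i ∈ range n, d (i + 1) ≤ d i - 2 * α i * e i + α i ^ 2 * c i)
    (hc : ∀ i ∈ range n, c i ≤ C) (hd : 0 ≤ d n) :
    2 * ∑ i ∈ range n, α i * e i ≤ d 0 + C * ∑ i ∈ range n, α i ^ 2 := by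
  have hstep : ∀ i ∈ range n, 2 * (α i * e i) + (d (i + 1) - d i) ≤ C * α i ^ 2 := by
    intro i hi
    have := mul_le_mul_of_nonneg_left (hc i hi) (sq_nonneg (α i))
    linarith [hdescent i hi]
  have hsum := sum_le_sum hstep
  rw [sum_add_distrib, sum_range_sub, ← mul_sum, ← mul_sum] at hsum
  linarith

theorem ConvexOn.sum_mul_map_centerMass_sub_le {E ι : Type*} [AddCommGroup E] [Module ℝ E]
    {s : Set E} {F : E → ℝ} (hF : ConvexOn ℝ s F) {t : Finset ι} {α : ι → ℝ} {x : ι → E}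
    (hα : ∀ i ∈ t, 0 ≤ α i) (hpos : 0 < ∑ i ∈ t, α i) (hx : ∀ i ∈ t, x i ∈ s) (z : E) :
    (∑ i ∈ t, α i) * (F (t.centerMass α x) - F z) ≤ ∑ i ∈ t, α i * (F (x i) - F z) := by
  have hjensen := hF.map_centerMass_le hα hpos hx
  simp only [centerMass, smul_eq_mul, Function.comp_apply] at hjensen ⊢
  rw [le_inv_mul_iff₀ hpos] at hjensen
  simp only [mul_sub, sum_sub_distrib, ← sum_mul]
  linarith

theorem le_infDist_sq_of_forall_le_dist_sq {X : Type*} [PseudoMetricSpace X] {x : X} {T : Set X}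
    {a : ℝ} (hT : T.Nonempty) (h : ∀ z ∈ T, a ≤ dist x z ^ 2) : a ≤ infDist x T ^ 2 := by
  have hsqrt : √a ≤ infDist x T := (le_infDist hT).2 fun z hz => by
    simpa [Real.sqrt_sq dist_nonneg] using Real.sqrt_le_sqrt (h z hz)
  calc a ≤ √a ^ 2 := Real.sq_sqrt' ▸ le_max_left a 0
    _ ≤ infDist x T ^ 2 := pow_le_pow_left₀ (Real.sqrt_nonneg a) hsqrt 2

theorem pss_ergodic_complexity
    {H : Type*} [NormedAddCommGroup H] [InnerProductSpace ℝ H]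
    (sf sg : Set H) (f g : H → ℝ)
    (hconvf : ConvexOn ℝ sf f) (hconvg : ConvexOn ℝ sg g)
    (hdom : sg ⊆ sf)
    (x u w : ℕ → H) (α : ℕ → ℝ) (hα : ∀ k, 0 < α k) (hx0 : x 0 ∈ sg)
    (hu : ∀ k, HasSubgradAt sf f (u k) (x k))
    (hw : ∀ k, HasSubgradAt sg g (w k) (x k))
    (hstep : ∀ k, IsProxPt sg g (α k) (x k - α k • u k) (x (k+1)))
    (xstar : H) (hstar : xstar ∈ SolSet sg f g) (k : ℕ) :
    (f ((∑ i ∈ Finset.range (k+1), α i)⁻¹ • ∑ i ∈ Finset.range (k+1), α i • x i)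
      + g ((∑ i ∈ Finset.range (k+1), α i)⁻¹ • ∑ i ∈ Finset.range (k+1), α i • x i))
        - (f xstar + g xstar)
      ≤ ((Metric.infDist (x 0) (SolSet sg f g))^2
          + ((Finset.range (k+1)).sup' (by simp) (fun i => ‖u i + w i‖^2))
              * ∑ i ∈ Finset.range (k+1), (α i)^2)
        / (2 * ∑ i ∈ Finset.range (k+1), α i) := by
  have hmem : ∀ i, x i ∈ sg := Nat.rec hx0 fun i _ => (hstep i).1
  have hS : 0 < ∑ i ∈ range (k + 1), α i := sum_pos (fun i _ => hα i) nonempty_range_add_one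
  rw [le_div_iff₀ (by positivity)]
  refine sub_le_iff_le_add.1 (le_infDist_sq_of_forall_le_dist_sq ⟨xstar, hstar⟩ fun z hz => ?_)
  have hFz : f z + g z = f xstar + g xstar := le_antisymm (hz.2 xstar hstar.1) (hstar.2 z hz.1)
  have hjensen := ((hconvf.subset hdom hconvg.1).add hconvg).sum_mul_map_centerMass_sub_le
    (fun i _ => (hα i).le) hS (fun i _ => hmem i) z
  have htelescope := two_mul_sum_le_of_descent (d := fun i => ‖x i - z‖ ^ 2)
    (e := fun i => (f (x i) + g (x i)) - (f z + g z))
    (C := (range (k + 1)).sup' nonempty_range_add_one fun i => ‖u i + w i‖ ^ 2)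
    (fun i _ => (hstep i).norm_sub_sq_le_of_hasSubgradAt hconvg (hα i) (hu i) (hw i) (hdom hz.1) hz.1)
    (fun i hi => le_sup' (fun i => ‖u i + w i‖ ^ 2) hi) (sq_nonneg ‖x (k + 1) - z‖)
  simp only [Pi.add_apply, centerMass] at hjensen
  rw [dist_eq_norm, ← hFz]
  linarith
end

section
/- Let (φ_k) be a sequence of nonnegative reals, (β_k) nonnegative with Σβ_k = +∞ and Σ β_k φ_k < +∞, and suppose there is ρ̄ > 0 with φ_k − φ_{k+1} ≤ ρ̄ β_k for all k. Then lim_{k→∞} φ_k = 0. -/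
open Filter Metric Finset Bornology
open scoped RealInnerProductSpace Topology

/-!
Since `∑ β = ∞` and `∑ β φ < ∞`, `φ` drops below any `c > 0` infinitely often. If `φ n ≥ 2c`, let
`m ≥ n` be the first index with `φ m < c`. On `[n, m)` we have `φ ≥ c`, so the slow decrease gives
`c < φ n - φ m ≤ ρ ∑_{[n,m)} β ≤ (ρ / c) ∑_{[n,m)} β φ ≤ (ρ / c) ∑_{k ≥ n} β_k φ_k`.
The tail tends to `0`, so eventually `φ n < 2c`.
-/

theorem sub_le_sum_Ico_of_sub_succ_le {α : Type*} [AddCommGroup α] [PartialOrder α]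
    [IsOrderedAddMonoid α] {f g : ℕ → α} (h : ∀ k, f k - f (k + 1) ≤ g k) {n m : ℕ} (hnm : n ≤ m) :
    f n - f m ≤ ∑ k ∈ Ico n m, g k := by
  induction m, hnm using Nat.le_induction with
  | base => simp
  | succ m hnm ih =>
    rw [sum_Ico_succ_top hnm, ← sub_add_sub_cancel (f n) (f m)]
    exact add_le_add ih (h m)

theorem sum_Ico_le_tsum_nat_add {f : ℕ → ℝ} (hf : Summable f) (hf0 : ∀ k, 0 ≤ f k) (n m : ℕ) :
    ∑ k ∈ Ico n m, f k ≤ ∑' k, f (k + n) := by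
  rw [sum_Ico_eq_sum_range]
  simp only [add_comm n]
  exact ((summable_nat_add_iff n).2 hf).sum_le_tsum _ fun k _ => hf0 (k + n)

theorem frequently_lt_of_summable_mul {φ β : ℕ → ℝ} (hβ : ∀ k, 0 ≤ β k)
    (hdiv : Tendsto (fun n => ∑ k ∈ range n, β k) atTop atTop)
    (hsum : Summable fun k => β k * φ k) {c : ℝ} (hc : 0 < c) : ∃ᶠ k in atTop, φ k < c := by
  by_contra h
  have hge : ∀ᶠ k in atTop, c ≤ φ k := by simpa using h
  have hβsum : Summable β := by
    refine (hsum.div_const c).of_norm_bounded_eventually_nat ?_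
    filter_upwards [hge] with k hk
    rw [Real.norm_of_nonneg (hβ k), le_div_iff₀ hc]
    exact mul_le_mul_of_nonneg_left hk (hβ k)
  exact (summable_iff_not_tendsto_nat_atTop_of_nonneg hβ).1 hβsum hdiv

theorem lt_two_mul_of_tsum_nat_add_lt {φ β : ℕ → ℝ} {ρ c : ℝ} (hρ : 0 < ρ) (hc : 0 < c)
    (hφ : ∀ k, 0 ≤ φ k) (hβ : ∀ k, 0 ≤ β k) (hsum : Summable fun k => β k * φ k)
    (hstep : ∀ k, φ k - φ (k + 1) ≤ ρ * β k) {n : ℕ}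
    (htail : ∑' k, β (k + n) * φ (k + n) < c ^ 2 / ρ) (hlater : ∃ m ≥ n, φ m < c) :
    φ n < 2 * c := by
  classical
  let m := Nat.find hlater
  obtain ⟨hnm, hφm⟩ : n ≤ m ∧ φ m < c := Nat.find_spec hlater
  have hbefore : ∀ k ∈ Ico n m, c ≤ φ k := fun k hk => by
    rw [mem_Ico] at hk
    simpa [hk.1] using Nat.find_min hlater hk.2
  have hweighted : ∑ k ∈ Ico n m, β k ≤ (∑ k ∈ Ico n m, β k * φ k) / c := by
    rw [le_div_iff₀ hc, sum_mul]
    exact sum_le_sum fun k hk => mul_le_mul_of_nonneg_left (hbefore k hk) (hβ k)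
  have hdrop : φ n - φ m < c :=
    calc φ n - φ m ≤ ρ * ∑ k ∈ Ico n m, β k := by
          rw [mul_sum]; exact sub_le_sum_Ico_of_sub_succ_le hstep hnm
      _ ≤ ρ * ((∑ k ∈ Ico n m, β k * φ k) / c) := by gcongr
      _ ≤ ρ * ((∑' k, β (k + n) * φ (k + n)) / c) := by
          gcongr; exact sum_Ico_le_tsum_nat_add hsum (fun k => mul_nonneg (hβ k) (hφ k)) n m
      _ < ρ * (c ^ 2 / ρ / c) := by gcongr
      _ = c := by field_simp
  linarith

theorem nonneg_summable_prod_tendsto_zero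
    (φ β : ℕ → ℝ) (ρbar : ℝ) (hρ : 0 < ρbar)
    (hφ : ∀ k, 0 ≤ φ k) (hβ : ∀ k, 0 ≤ β k)
    (hdiv : Filter.Tendsto (fun n => ∑ i ∈ Finset.range n, β i) Filter.atTop Filter.atTop)
    (hsum : Summable (fun k => β k * φ k))
    (hstep : ∀ k, φ k - φ (k+1) ≤ ρbar * β k) :
    Filter.Tendsto φ Filter.atTop (nhds 0) := by
  refine tendsto_order.2 ⟨fun a ha => .of_forall fun k => ha.trans_le (hφ k), fun ε hε => ?_⟩
  have hc : 0 < ε / 2 := half_pos hε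
  have htail : ∀ᶠ n in atTop, ∑' k, β (k + n) * φ (k + n) < (ε / 2) ^ 2 / ρbar :=
    (tendsto_sum_nat_add fun k => β k * φ k).eventually (gt_mem_nhds (by positivity))
  filter_upwards [htail] with n hn
  have hlater := (frequently_lt_of_summable_mul hβ hdiv hsum hc).forall_exists_of_atTop n
  simpa only [mul_div_cancel₀ ε two_ne_zero] using
    lt_two_mul_of_tsum_nat_add_lt hρ hc hφ hβ hsum hstep hn hlater
end

section
/- If a sequence (x^k) in a real Hilbert space is quasi-Fejér convergent to a nonempty set S (i.e. for each x ∈ S there is a summable nonnegative sequence (ε_k) with ‖x^{k+1} − x‖² ≤ ‖x^k − x‖² + ε_k for all k), then (x^k) is bounded. -/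
open Filter Metric Finset Bornology
open scoped RealInnerProductSpace Topology

theorem le_add_sum_range_of_le_add {α : Type*} [AddCommMonoid α] [PartialOrder α]
    [IsOrderedAddMonoid α] {u ε : ℕ → α} (hu : ∀ k, u (k + 1) ≤ u k + ε k) (n : ℕ) :
    u n ≤ u 0 + ∑ i ∈ range n, ε i := by
  induction n with
  | zero => simp
  | succ n ih =>
    calc u (n + 1) ≤ u n + ε n := hu n
      _ ≤ u 0 + ∑ i ∈ range n, ε i + ε n := by gcongr
      _ = u 0 + ∑ i ∈ range (n + 1), ε i := by rw [sum_range_succ, add_assoc]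

theorem le_add_tsum_of_le_add {u ε : ℕ → ℝ} (hε : ∀ k, 0 ≤ ε k) (hε_sum : Summable ε)
    (hu : ∀ k, u (k + 1) ≤ u k + ε k) (n : ℕ) :
    u n ≤ u 0 + ∑' i, ε i :=
  (le_add_sum_range_of_le_add hu n).trans <| by
    gcongr; exact hε_sum.sum_le_tsum _ fun i _ => hε i

theorem isBounded_range_of_sq_norm_sub_le {E : Type*} [SeminormedAddCommGroup E] {x : ℕ → E}
    {z : E} {C : ℝ} (hC : ∀ k, ‖x k - z‖ ^ 2 ≤ C) : IsBounded (Set.range x) :=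
  isBounded_closedBall.subset <| Set.range_subset_iff.2 fun k =>
    mem_closedBall_iff_norm.2 <| Real.le_sqrt_of_sq_le (hC k)

theorem quasiFejer_bounded_general
    {H : Type*} [NormedAddCommGroup H]
    (x : ℕ → H) (S : Set H) (hS : S.Nonempty)
    (h : ∀ z ∈ S, ∃ ε : ℕ → ℝ, (∀ k, 0 ≤ ε k) ∧ Summable ε ∧
      ∀ k, ‖x (k+1) - z‖^2 ≤ ‖x k - z‖^2 + ε k) :
    Bornology.IsBounded (Set.range x) := by
  obtain ⟨z, hz⟩ := hS
  obtain ⟨ε, hε, hε_sum, hfejer⟩ := h z hz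
  exact isBounded_range_of_sq_norm_sub_le (le_add_tsum_of_le_add hε hε_sum hfejer)

theorem quasiFejer_bounded
    {H : Type*} [NormedAddCommGroup H] [InnerProductSpace ℝ H] [CompleteSpace H]
    (x : ℕ → H) (S : Set H) (hS : S.Nonempty)
    (h : ∀ z ∈ S, ∃ ε : ℕ → ℝ, (∀ k, 0 ≤ ε k) ∧ Summable ε ∧
      ∀ k, ‖x (k+1) - z‖^2 ≤ ‖x k - z‖^2 + ε k) :
    Bornology.IsBounded (Set.range x) :=
  quasiFejer_bounded_general x S hS h
end

section
/- Let (x^k) be generated by the proximal subgradient splitting method with exogenous stepsizes α_k = β_k/max{1,‖u^k‖}, Σβ_k² < ∞, Σβ_k = ∞, under assumptions A1 (subgradients of f bounded on bounded subsets of dom g) and A2 (bounded selections of ∂g on dom g). If S* ≠ ∅, then lim_{k→∞}(f+g)(x^k) = min(f+g) and (x^k) converges weakly to some point of S*. -/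
/-!
For a minimizer `z`, the prox step and the two subgradient inequalities give the quasi-Fejér
estimate `‖x (k+1) - z‖² + 2 α_k ((f+g)(x k) - min) ≤ ‖x k - z‖² + C β_k²`, because the
normalization keeps `α_k ≤ β_k` and `α_k ‖u k‖ ≤ β_k`. Hence `‖x k - z‖` converges, the iterates
are bounded and `∑ α_k ((f+g)(x k) - min) < ∞`. On the bounded iterates A1 bounds `‖u k‖`, so
`β_k = O(α_k)` and `∑ β_k ((f+g)(x k) - min) < ∞`; since the objective rises by at most `O(β_k)`
per step while `∑ β_k = ∞`, the gap tends to `0`. Weak cluster points lie in every closed convex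
sublevel set above the minimum, hence in `S*`, and Opial's argument (`‖x k - z‖` converges for
each `z ∈ S*`) makes the weak cluster point unique.
-/

open Filter Metric Finset Bornology
open scoped RealInnerProductSpace Topology

theorem summable_of_succ_add_le {a c ε : ℕ → ℝ} (ha : ∀ k, 0 ≤ a k) (hc : ∀ k, 0 ≤ c k)
    (hε : ∀ k, 0 ≤ ε k) (hεs : Summable ε) (h : ∀ k, a (k + 1) + c k ≤ a k + ε k) :
    Summable c := by
  have hpart : ∀ n, ∑ k ∈ range n, c k + a n ≤ a 0 + ∑ k ∈ range n, ε k := by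
    intro n
    induction n with
    | zero => simp
    | succ n ih => rw [sum_range_succ, sum_range_succ]; linarith [h n]
  refine summable_of_sum_range_le hc (c := a 0 + ∑' k, ε k) fun n => ?_
  linarith [hpart n, ha n, hεs.sum_le_tsum (range n) fun i _ => hε i]

theorem exists_tendsto_of_succ_le_add {a ε : ℕ → ℝ} (ha : ∀ k, 0 ≤ a k) (hε : ∀ k, 0 ≤ ε k)
    (hεs : Summable ε) (h : ∀ k, a (k + 1) ≤ a k + ε k) : ∃ L, Tendsto a atTop (𝓝 L) := by
  set b : ℕ → ℝ := fun n => a n - ∑ k ∈ range n, ε k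
  have hb : Antitone b :=
    antitone_nat_of_succ_le fun n => by simp only [b, sum_range_succ]; linarith [h n]
  have hbdd : BddBelow (Set.range b) := by
    refine ⟨-∑' k, ε k, ?_⟩
    rintro _ ⟨n, rfl⟩
    linarith [ha n, hεs.sum_le_tsum (range n) fun i _ => hε i]
  refine ⟨_, ((tendsto_atTop_ciInf hb hbdd).add hεs.tendsto_sum_tsum_nat).congr fun n => ?_⟩
  simp only [b, sub_add_cancel]

theorem frequently_lt_of_summable_mul_s9 {t δ : ℕ → ℝ} (hδ : ∀ k, 0 ≤ δ k) (hdiv : ¬Summable δ)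
    (hs : Summable fun k => δ k * t k) {η : ℝ} (hη : 0 < η) : ∃ᶠ k in atTop, t k < η := by
  refine fun hge => hdiv (Summable.of_norm_bounded_eventually_nat (hs.div_const η) ?_)
  filter_upwards [hge] with k hk
  rw [Real.norm_of_nonneg (hδ k), le_div_iff₀ hη]
  exact mul_le_mul_of_nonneg_left (not_lt.1 hk) (hδ k)

theorem le_add_sum_of_succ_le_add {t δ : ℕ → ℝ} {C a b : ℝ} {K : ℕ} (ht : ∀ k, 0 ≤ t k)
    (hδ : ∀ k, 0 ≤ δ k) (ha : 0 < a) (hC : 0 ≤ C) (hup : ∀ k, t (k + 1) ≤ t k + C * δ k)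
    (hb : ∀ k ≥ K, C * δ k ≤ b) (hK : t K ≤ a) :
    ∀ n ≥ K, t n ≤ a + b + C / a * ∑ j ∈ Ico K n, δ j * t j := by
  have hsum : ∀ n, 0 ≤ C / a * ∑ j ∈ Ico K n, δ j * t j := fun n =>
    mul_nonneg (div_nonneg hC ha.le) (sum_nonneg fun j _ => mul_nonneg (hδ j) (ht j))
  intro n hn
  induction n, hn using Nat.le_induction with
  | base => linarith [hsum K, (mul_nonneg hC (hδ K)).trans (hb K le_rfl)]
  | succ n hn ih =>
    rw [sum_Ico_succ_top hn, mul_add]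
    rcases le_or_gt (t n) a with hsmall | hlarge
    · -- below the threshold `a`, one step adds at most `b`
      linarith [hup n, hb n hn, hsum n, mul_nonneg (div_nonneg hC ha.le) (mul_nonneg (hδ n) (ht n))]
    · -- above it, the step `C δ n` is paid for by the term `δ n * t n` of the sum
      have : C * δ n ≤ C / a * (δ n * t n) := by
        rw [div_mul_eq_mul_div, le_div_iff₀ ha]
        nlinarith [mul_nonneg hC (hδ n)]
      linarith [hup n]

theorem tendsto_zero_of_summable_mul {t δ : ℕ → ℝ} {C : ℝ} (ht : ∀ k, 0 ≤ t k)
    (hδ : ∀ k, 0 ≤ δ k) (hδ0 : Tendsto δ atTop (𝓝 0)) (hdiv : ¬Summable δ)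
    (hs : Summable fun k => δ k * t k) (hC : 0 ≤ C) (hup : ∀ k, t (k + 1) ≤ t k + C * δ k) :
    Tendsto t atTop (𝓝 0) := by
  wlog hCpos : 0 < C generalizing C
  · exact this zero_le_one (fun k => by nlinarith [hup k, hδ k]) zero_lt_one
  refine tendsto_order.2 ⟨fun r hr => .of_forall fun k => hr.trans_le (ht k), fun η hη => ?_⟩
  obtain ⟨N₁, hN₁⟩ : ∃ N, ∀ k ≥ N, C * δ k ≤ η / 4 := eventually_atTop.1 <|
    (by simpa using hδ0.const_mul C : Tendsto (fun k => C * δ k) atTop (𝓝 0)).eventually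
      (ge_mem_nhds (by positivity : (0 : ℝ) < η / 4))
  obtain ⟨N₂, hN₂⟩ : ∃ N, ∀ K ≥ N, ∑' j, δ (j + K) * t (j + K) < η ^ 2 / (8 * C) :=
    eventually_atTop.1 <| (tendsto_sum_nat_add fun j => δ j * t j).eventually
      (gt_mem_nhds (by positivity : (0 : ℝ) < η ^ 2 / (8 * C)))
  obtain ⟨K, hK, htK⟩ :=
    (frequently_lt_of_summable_mul_s9 hδ hdiv hs (half_pos hη)).forall_exists_of_atTop (max N₁ N₂)
  filter_upwards [eventually_ge_atTop K] with n hn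
  have htail : ∑ j ∈ Ico K n, δ j * t j < η ^ 2 / (8 * C) := by
    refine lt_of_le_of_lt ?_ (hN₂ K (le_of_max_le_right hK))
    rw [sum_Ico_eq_sum_range]
    simp only [add_comm K]
    exact ((summable_nat_add_iff K).2 hs).sum_le_tsum _ fun j _ => mul_nonneg (hδ _) (ht _)
  have hbound := le_add_sum_of_succ_le_add ht hδ (half_pos hη) hC hup
    (fun k hk => hN₁ k ((le_of_max_le_left hK).trans hk)) htK.le n hn
  have : C / (η / 2) * ∑ j ∈ Ico K n, δ j * t j < η / 4 := by
    calc C / (η / 2) * ∑ j ∈ Ico K n, δ j * t j < C / (η / 2) * (η ^ 2 / (8 * C)) :=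
          mul_lt_mul_of_pos_left htail (by positivity)
      _ = η / 4 := by field_simp; ring
  linarith

theorem LowerSemicontinuousOn.isClosed_sep_le {α γ : Type*} [TopologicalSpace α] [LinearOrder γ]
    {f : α → γ} {s : Set α} (hf : LowerSemicontinuousOn f s) (hs : IsClosed s) (r : γ) :
    IsClosed {x ∈ s | f x ≤ r} := by
  obtain ⟨v, hv, hsv⟩ := lowerSemicontinuousOn_iff_preimage_Iic.1 hf r
  change IsClosed (s ∩ f ⁻¹' Set.Iic r)
  rw [hsv]
  exact hs.inter hv

theorem isBounded_range_of_tendsto_norm_sub_sq {E : Type*} [SeminormedAddCommGroup E]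
    {x : ℕ → E} {z : E} {L : ℝ} (h : Tendsto (fun k => ‖x k - z‖ ^ 2) atTop (𝓝 L)) :
    IsBounded (Set.range x) := by
  obtain ⟨M, hM⟩ := h.bddAbove_range
  refine (isBounded_iff_subset_closedBall z).2 ⟨√M, ?_⟩
  rintro _ ⟨k, rfl⟩
  rw [mem_closedBall, dist_eq_norm]
  exact Real.le_sqrt_of_sq_le (hM ⟨k, rfl⟩)

section WeakConvergence

variable {H : Type*} [NormedAddCommGroup H] [InnerProductSpace ℝ H] {ι : Type*}

def WeakTendsto (x : ι → H) (l : Filter ι) (p : H) : Prop :=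
  ∀ y, Tendsto (fun i => ⟪x i, y⟫) l (𝓝 ⟪p, y⟫)

theorem exists_weakTendsto_of_norm_le [CompleteSpace H] (U : Ultrafilter ι) {x : ι → H} {R : ℝ}
    (hx : ∀ i, ‖x i‖ ≤ R) : ∃ p, WeakTendsto x (U : Filter ι) p := by
  -- Banach–Alaoglu for the Riesz images `⟪x i, ·⟫`, then back through the Riesz isomorphism
  set φ : ι → WeakDual ℝ H := fun i => StrongDual.toWeakDual (InnerProductSpace.toDual ℝ H (x i))
  obtain ⟨ψ, -, hψ⟩ := (WeakDual.isCompact_closedBall 0 R).ultrafilter_le_nhds (U.map φ) (by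
    rw [Ultrafilter.coe_map, le_principal_iff, Filter.mem_map]
    exact univ_mem' fun i => by simpa [φ] using hx i)
  refine ⟨(InnerProductSpace.toDual ℝ H).symm (WeakDual.toStrongDual ψ), fun y => ?_⟩
  rw [InnerProductSpace.toDual_symm_apply]
  exact tendsto_iff_forall_eval_tendsto_topDualPairing.1 hψ y

theorem WeakTendsto.mem_of_convex [CompleteSpace H] {l : Filter ι} [l.NeBot] {x : ι → H} {p : H}
    {C : Set H} (hxp : WeakTendsto x l p) (hC : Convex ℝ C) (hCc : IsClosed C)
    (hxC : ∀ᶠ i in l, x i ∈ C) : p ∈ C := by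
  by_contra hp
  obtain ⟨φ, r, hφC, hφp⟩ := geometric_hahn_banach_closed_point hC hCc hp
  set v := (InnerProductSpace.toDual ℝ H).symm φ
  have hφ : ∀ z, φ z = ⟪z, v⟫ := fun z => by
    rw [real_inner_comm, InnerProductSpace.toDual_symm_apply]
  have : ⟪p, v⟫ ≤ r :=
    le_of_tendsto (hxp v) (hxC.mono fun i hi => by simpa [hφ] using (hφC _ hi).le)
  rw [hφ] at hφp
  linarith

theorem ConvexOn.le_of_weakTendsto [CompleteSpace H] {s : Set H} {F : H → ℝ}
    (hF : ConvexOn ℝ s F) (hFl : LowerSemicontinuousOn F s) (hs : IsClosed s) {l : Filter ι}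
    [l.NeBot] {x : ι → H} {p : H} {m : ℝ} (hp : WeakTendsto x l p) (hxs : ∀ᶠ i in l, x i ∈ s)
    (hm : Tendsto (fun i => F (x i)) l (𝓝 m)) : F p ≤ m := by
  refine le_of_forall_pos_le_add fun ε hε => ?_
  have hev : ∀ᶠ i in l, x i ∈ {y ∈ s | F y ≤ m + ε} :=
    hxs.and (hm.eventually (eventually_le_nhds (lt_add_of_pos_right m hε)))
  exact (hp.mem_of_convex (hF.convex_le _) (hFl.isClosed_sep_le hs _) hev).2

theorem mem_solSet_of_weakTendsto [CompleteSpace H] {sf sg : Set H} {f g : H → ℝ}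
    (hf : ConvexOn ℝ sf f) (hg : ConvexOn ℝ sg g) (hfl : LowerSemicontinuousOn f sf)
    (hgl : LowerSemicontinuousOn g sg) (hsg : IsClosed sg) (hdom : sg ⊆ sf)
    {l : Filter ι} [l.NeBot] {x : ι → H} {p z : H} (hp : WeakTendsto x l p)
    (hxs : ∀ i, x i ∈ sg) (hz : z ∈ SolSet sg f g)
    (hobj : Tendsto (fun i => f (x i) + g (x i)) l (𝓝 (f z + g z))) : p ∈ SolSet sg f g := by
  have hxs' : ∀ᶠ i in l, x i ∈ sg := .of_forall hxs
  have hle := ((hf.subset hdom hg.1).add hg).le_of_weakTendsto ((hfl.mono hdom).add hgl) hsg hp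
    hxs' hobj
  exact ⟨hp.mem_of_convex hg.1 hsg hxs', fun y hy => hle.trans (hz.2 y hy)⟩

theorem WeakTendsto.eq_of_tendsto_norm_sub_sq {l l₁ l₂ : Filter ι} [l₁.NeBot] [l₂.NeBot]
    (h₁ : l₁ ≤ l) (h₂ : l₂ ≤ l) {x : ι → H} {p q : H} {Lp Lq : ℝ}
    (hLp : Tendsto (fun i => ‖x i - p‖ ^ 2) l (𝓝 Lp))
    (hLq : Tendsto (fun i => ‖x i - q‖ ^ 2) l (𝓝 Lq))
    (hp : WeakTendsto x l₁ p) (hq : WeakTendsto x l₂ q) : p = q := by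
  set c := (Lq - Lp + ‖p‖ ^ 2 - ‖q‖ ^ 2) / 2
  -- polarization: `⟪x, p - q⟫` is determined by `‖x - p‖²` and `‖x - q‖²`
  have hpol : ∀ z : H, ⟪z, p - q⟫ = (‖z - q‖ ^ 2 - ‖z - p‖ ^ 2 + ‖p‖ ^ 2 - ‖q‖ ^ 2) / 2 := by
    intro z
    rw [norm_sub_sq_real, norm_sub_sq_real, inner_sub_right]
    ring
  have hc : Tendsto (fun i => ⟪x i, p - q⟫) l (𝓝 c) := by
    simp only [hpol]
    exact (((hLq.sub hLp).add_const _).sub_const _).div_const 2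
  have hpc : ⟪p, p - q⟫ = c := tendsto_nhds_unique (hp _) (hc.mono_left h₁)
  have hqc : ⟪q, p - q⟫ = c := tendsto_nhds_unique (hq _) (hc.mono_left h₂)
  rw [← sub_eq_zero, ← inner_self_eq_zero (𝕜 := ℝ), inner_sub_left, hpc, hqc, sub_self]

theorem exists_weakTendsto_of_tendsto_norm_sub_sq [CompleteSpace H] {x : ℕ → H} {S : Set H}
    (hx : IsBounded (Set.range x))
    (hS : ∀ z ∈ S, ∃ L, Tendsto (fun k => ‖x k - z‖ ^ 2) atTop (𝓝 L))
    (hcl : ∀ (U : Ultrafilter ℕ) (p : H), (U : Filter ℕ) ≤ atTop → WeakTendsto x (U : Filter ℕ) p →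
      p ∈ S) :
    ∃ p ∈ S, WeakTendsto x atTop p := by
  obtain ⟨R, hR⟩ := isBounded_iff_forall_norm_le.1 hx
  have hU (U : Ultrafilter ℕ) (hU : (U : Filter ℕ) ≤ atTop) :
      ∃ p ∈ S, WeakTendsto x (U : Filter ℕ) p := by
    obtain ⟨p, hp⟩ := exists_weakTendsto_of_norm_le U fun k => hR _ ⟨k, rfl⟩
    exact ⟨p, hcl U p hU hp, hp⟩
  obtain ⟨p, hpS, hp⟩ := hU _ (Ultrafilter.of_le atTop)
  -- every ultrafilter finer than `atTop` has a weak limit in `S`, which must be `p`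
  refine ⟨p, hpS, fun y => (tendsto_iff_ultrafilter _ _ _).2 fun U hUle => ?_⟩
  obtain ⟨q, hqS, hq⟩ := hU U hUle
  obtain ⟨Lp, hLp⟩ := hS p hpS
  obtain ⟨Lq, hLq⟩ := hS q hqS
  rw [WeakTendsto.eq_of_tendsto_norm_sub_sq (Ultrafilter.of_le atTop) hUle hLp hLq hp hq]
  exact hq y

end WeakConvergence

section Subgradients

variable {H : Type*} [NormedAddCommGroup H] [InnerProductSpace ℝ H]

theorem HasSubgradAt.sub_le {s : Set H} {h : H → ℝ} {v x y : H} (hv : HasSubgradAt s h v x)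
    (hy : y ∈ s) : h x - h y ≤ ‖v‖ * ‖x - y‖ := by
  have hvy := hv y hy
  rw [← neg_sub x y, inner_neg_right] at hvy
  linarith [real_inner_le_norm v (x - y)]

theorem IsProxPt.hasSubgradAt {s : Set H} {g : H → ℝ} {α : ℝ} {z p : H} (hg : ConvexOn ℝ s g)
    (hα : 0 < α) (hp : IsProxPt s g α z p) : HasSubgradAt s g (α⁻¹ • (z - p)) p := by
  intro y hy
  have hip : ⟪α⁻¹ • (z - p), y - p⟫ = -(2 * (1 / (2 * α))) * ⟪p - z, y - p⟫ := by
    rw [real_inner_smul_left, ← neg_sub p z, inner_neg_left]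
    field_simp
  -- minimality of `p` against `p + t • (y - p)`, divided by `t`
  have key : ∀ t ∈ Set.Ioo (0 : ℝ) 1,
      g p + ⟪α⁻¹ • (z - p), y - p⟫ ≤ g y + t * (1 / (2 * α) * ‖y - p‖ ^ 2) := by
    rintro t ⟨ht0, ht1⟩
    have hmem := hg.1 hp.1 hy (sub_nonneg.2 ht1.le) ht0.le (sub_add_cancel 1 t)
    have hconv := hg.2 hp.1 hy (sub_nonneg.2 ht1.le) ht0.le (sub_add_cancel 1 t)
    have hmin := hp.2 _ hmem
    have e : (1 - t) • p + t • y - z = (p - z) + t • (y - p) := by module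
    rw [e, norm_add_sq_real, real_inner_smul_right, norm_smul, Real.norm_of_nonneg ht0.le] at hmin
    rw [smul_eq_mul, smul_eq_mul] at hconv
    rw [hip]
    refine le_of_mul_le_mul_left ?_ ht0
    linarith
  have hlim : Tendsto (fun t : ℝ => g y + t * (1 / (2 * α) * ‖y - p‖ ^ 2)) (𝓝[>] 0)
      (𝓝 (g y)) := by
    refine tendsto_nhdsWithin_of_tendsto_nhds ?_
    simpa using ((tendsto_id (x := 𝓝 (0 : ℝ))).mul_const _).const_add (g y)
  exact ge_of_tendsto hlim (eventually_of_mem (Ioo_mem_nhdsGT one_pos) key)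

end Subgradients

section ProxStep

variable {H : Type*} [NormedAddCommGroup H] [InnerProductSpace ℝ H] {sf sg : Set H} {f g : H → ℝ}
  {α : ℝ} {x u w p y : H}

theorem norm_prox_step_sub_le (hg : ConvexOn ℝ sg g) (hα : 0 < α) (hx : x ∈ sg)
    (hw : HasSubgradAt sg g w x) (hp : IsProxPt sg g α (x - α • u) p) :
    ‖p - x‖ ≤ α * (‖w‖ + ‖u‖) := by
  have hv := hp.hasSubgradAt hg hα x hx
  have hgw := hw.sub_le hp.1
  have hu := real_inner_le_norm u (x - p)
  have e : α * ⟪α⁻¹ • (x - α • u - p), x - p⟫ = ‖x - p‖ ^ 2 - α * ⟪u, x - p⟫ := by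
    rw [real_inner_smul_left, ← mul_assoc, mul_inv_cancel₀ hα.ne', one_mul, sub_right_comm,
      inner_sub_left, real_inner_smul_left, real_inner_self_eq_norm_sq]
  have hsq : ‖x - p‖ ^ 2 ≤ α * (‖w‖ + ‖u‖) * ‖x - p‖ := by
    nlinarith [mul_le_mul_of_nonneg_left hv hα.le]
  rw [norm_sub_rev]
  rcases (norm_nonneg (x - p)).eq_or_lt with h0 | hpos
  · rw [← h0]
    positivity
  · exact le_of_mul_le_mul_right (by linarith) hpos

theorem norm_prox_step_sub_sq_le (hg : ConvexOn ℝ sg g) (hα : 0 < α)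
    (hu : HasSubgradAt sf f u x) (hw : HasSubgradAt sg g w x)
    (hp : IsProxPt sg g α (x - α • u) p) (hyf : y ∈ sf) (hy : y ∈ sg) :
    ‖p - y‖ ^ 2 ≤ ‖x - y‖ ^ 2 - 2 * α * (f x + g x - (f y + g y))
      + 2 * α * ‖w‖ * ‖p - x‖ + (α * ‖u‖) ^ 2 := by
  have hv := hp.hasSubgradAt hg hα y hy
  have hfy := hu y hyf
  have hgw := hw.sub_le hp.1
  have hup := real_inner_le_norm u (x - p)
  have e : ‖x - y‖ ^ 2 = ‖x - p‖ ^ 2 + ‖p - y‖ ^ 2 - 2 * α * ⟪α⁻¹ • (x - α • u - p), y - p⟫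
      - 2 * α * ⟪u, x - p⟫ - 2 * α * ⟪u, y - x⟫ := by
    simp only [← real_inner_self_eq_norm_sq, inner_sub_left, inner_sub_right, real_inner_smul_left,
      real_inner_comm x y, real_inner_comm x p, real_inner_comm p y]
    field_simp
    ring
  rw [norm_sub_rev p x]
  nlinarith [mul_le_mul_of_nonneg_left hv hα.le, mul_le_mul_of_nonneg_left hfy hα.le,
    mul_le_mul_of_nonneg_left hgw hα.le, mul_le_mul_of_nonneg_left hup hα.le,
    sq_nonneg (‖x - p‖ - α * ‖u‖)]

end ProxStep

section ProxSubgradientMethod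

variable {H : Type*} [NormedAddCommGroup H] [InnerProductSpace ℝ H]

noncomputable def normalizedStep (β : ℕ → ℝ) (u : ℕ → H) (k : ℕ) : ℝ := β k / max 1 ‖u k‖

structure IsProxSubgradSeq (sf sg : Set H) (f g : H → ℝ) (β : ℕ → ℝ) (x u : ℕ → H) : Prop where
  pos : ∀ k, 0 < β k
  mem_zero : x 0 ∈ sg
  hasSubgradAt : ∀ k, HasSubgradAt sf f (u k) (x k)
  isProxPt : ∀ k,
    IsProxPt sg g (normalizedStep β u k) (x k - normalizedStep β u k • u k) (x (k + 1))

namespace IsProxSubgradSeq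

variable {sf sg : Set H} {f g : H → ℝ} {β : ℕ → ℝ} {x u : ℕ → H} {ρ : ℝ}

theorem mem (hx : IsProxSubgradSeq sf sg f g β x u) : ∀ k, x k ∈ sg
  | 0 => hx.mem_zero
  | k + 1 => (hx.isProxPt k).1

theorem step_pos (hx : IsProxSubgradSeq sf sg f g β x u) (k : ℕ) : 0 < normalizedStep β u k :=
  div_pos (hx.pos k) (one_pos.trans_le (le_max_left _ _))

theorem step_le (hx : IsProxSubgradSeq sf sg f g β x u) (k : ℕ) : normalizedStep β u k ≤ β k :=
  div_le_self (hx.pos k).le (le_max_left _ _)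

theorem step_mul_norm_le (hx : IsProxSubgradSeq sf sg f g β x u) (k : ℕ) :
    normalizedStep β u k * ‖u k‖ ≤ β k := by
  rw [normalizedStep, div_mul_eq_mul_div, div_le_iff₀ (one_pos.trans_le (le_max_left _ _))]
  exact mul_le_mul_of_nonneg_left (le_max_right _ _) (hx.pos k).le

theorem le_mul_step (hx : IsProxSubgradSeq sf sg f g β x u) {ζ : ℝ} {k : ℕ} (hζ : ‖u k‖ ≤ ζ) :
    β k ≤ max 1 ζ * normalizedStep β u k := by
  rw [normalizedStep, mul_div_assoc', le_div_iff₀ (one_pos.trans_le (le_max_left _ _)),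
    mul_comm (max 1 ζ)]
  exact mul_le_mul_of_nonneg_left (max_le_max le_rfl hζ) (hx.pos k).le

theorem norm_succ_sub_le (hx : IsProxSubgradSeq sf sg f g β x u) (hg : ConvexOn ℝ sg g)
    (hgρ : ∀ z ∈ sg, ∃ w, HasSubgradAt sg g w z ∧ ‖w‖ ≤ ρ) (k : ℕ) :
    ‖x (k + 1) - x k‖ ≤ (ρ + 1) * β k := by
  obtain ⟨w, hw, hwρ⟩ := hgρ _ (hx.mem k)
  calc ‖x (k + 1) - x k‖ ≤ normalizedStep β u k * (‖w‖ + ‖u k‖) :=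
        norm_prox_step_sub_le hg (hx.step_pos k) (hx.mem k) hw (hx.isProxPt k)
    _ ≤ (ρ + 1) * β k := by
        nlinarith [hx.step_le k, hx.step_mul_norm_le k, hx.step_pos k, norm_nonneg w]

theorem norm_succ_sub_sq_add_le (hx : IsProxSubgradSeq sf sg f g β x u) (hg : ConvexOn ℝ sg g)
    (hdom : sg ⊆ sf) (hgρ : ∀ z ∈ sg, ∃ w, HasSubgradAt sg g w z ∧ ‖w‖ ≤ ρ) {y : H} (hy : y ∈ sg)
    (k : ℕ) :
    ‖x (k + 1) - y‖ ^ 2 + 2 * normalizedStep β u k * (f (x k) + g (x k) - (f y + g y))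
      ≤ ‖x k - y‖ ^ 2 + (1 + 2 * ρ * (ρ + 1)) * β k ^ 2 := by
  obtain ⟨w, hw, hwρ⟩ := hgρ _ (hx.mem k)
  have hdesc := norm_prox_step_sub_sq_le hg (hx.step_pos k) (hx.hasSubgradAt k) hw
    (hx.isProxPt k) (hdom hy) hy
  have hprox : normalizedStep β u k * ‖w‖ * ‖x (k + 1) - x k‖ ≤ β k * ρ * ((ρ + 1) * β k) :=
    mul_le_mul (mul_le_mul (hx.step_le k) hwρ (norm_nonneg _) (hx.pos k).le)
      (hx.norm_succ_sub_le hg hgρ k) (norm_nonneg _)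
      (mul_nonneg (hx.pos k).le ((norm_nonneg w).trans hwρ))
  have hsub : (normalizedStep β u k * ‖u k‖) ^ 2 ≤ β k ^ 2 :=
    pow_le_pow_left₀ (mul_nonneg (hx.step_pos k).le (norm_nonneg _)) (hx.step_mul_norm_le k) 2
  linarith

theorem tendsto_norm_sub_sq (hx : IsProxSubgradSeq sf sg f g β x u) (hg : ConvexOn ℝ sg g)
    (hdom : sg ⊆ sf) (hgρ : ∀ z ∈ sg, ∃ w, HasSubgradAt sg g w z ∧ ‖w‖ ≤ ρ) (hρ : 0 ≤ ρ)
    (hβ2 : Summable fun k => β k ^ 2) {z : H} (hz : z ∈ SolSet sg f g) :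
    ∃ L, Tendsto (fun k => ‖x k - z‖ ^ 2) atTop (𝓝 L) := by
  refine exists_tendsto_of_succ_le_add (fun k => sq_nonneg _)
    (fun k => mul_nonneg (by positivity) (sq_nonneg _)) (hβ2.mul_left (1 + 2 * ρ * (ρ + 1)))
    fun k => ?_
  have hgap := mul_nonneg (hx.step_pos k).le (sub_nonneg.2 (hz.2 _ (hx.mem k)))
  linarith [hx.norm_succ_sub_sq_add_le hg hdom hgρ hz.1 k]

theorem summable_step_mul_sub (hx : IsProxSubgradSeq sf sg f g β x u) (hg : ConvexOn ℝ sg g)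
    (hdom : sg ⊆ sf) (hgρ : ∀ z ∈ sg, ∃ w, HasSubgradAt sg g w z ∧ ‖w‖ ≤ ρ) (hρ : 0 ≤ ρ)
    (hβ2 : Summable fun k => β k ^ 2) {z : H} (hz : z ∈ SolSet sg f g) :
    Summable fun k => normalizedStep β u k * (f (x k) + g (x k) - (f z + g z)) := by
  have hgap k := mul_nonneg (hx.step_pos k).le (sub_nonneg.2 (hz.2 _ (hx.mem k)))
  refine (summable_mul_left_iff two_ne_zero).1 <|
    summable_of_succ_add_le (a := fun k => ‖x k - z‖ ^ 2) (fun k => sq_nonneg _)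
    (fun k => mul_nonneg zero_le_two (hgap k)) (fun k => mul_nonneg (by positivity) (sq_nonneg _))
    (hβ2.mul_left (1 + 2 * ρ * (ρ + 1))) fun k => ?_
  linarith [hx.norm_succ_sub_sq_add_le hg hdom hgρ hz.1 k]

theorem tendsto_objective (hx : IsProxSubgradSeq sf sg f g β x u) (hg : ConvexOn ℝ sg g)
    (hdom : sg ⊆ sf) (hgρ : ∀ z ∈ sg, ∃ w, HasSubgradAt sg g w z ∧ ‖w‖ ≤ ρ) (hρ : 0 ≤ ρ)
    (hβ2 : Summable fun k => β k ^ 2) (hdiv : ¬Summable β) {ζ : ℝ} (hζ : ∀ k, ‖u k‖ ≤ ζ)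
    {z : H} (hz : z ∈ SolSet sg f g) :
    Tendsto (fun k => f (x k) + g (x k)) atTop (𝓝 (f z + g z)) := by
  set gap := fun k => f (x k) + g (x k) - (f z + g z)
  have hgap k : 0 ≤ gap k := sub_nonneg.2 (hz.2 _ (hx.mem k))
  have hsum : Summable fun k => β k * gap k := by
    refine ((hx.summable_step_mul_sub hg hdom hgρ hρ hβ2 hz).mul_left (max 1 ζ)).of_nonneg_of_le
      (fun k => mul_nonneg (hx.pos k).le (hgap k)) fun k => ?_
    rw [← mul_assoc]
    exact mul_le_mul_of_nonneg_right (hx.le_mul_step (hζ k)) (hgap k)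
  have hup k : gap (k + 1) ≤ gap k + (ζ + ρ) * (ρ + 1) * β k := by
    obtain ⟨w, hw, hwρ⟩ := hgρ _ (hx.mem (k + 1))
    have hfx := (hx.hasSubgradAt (k + 1)).sub_le (hdom (hx.mem k))
    have hgx := hw.sub_le (hx.mem k)
    have hd := hx.norm_succ_sub_le hg hgρ k
    have hζd := mul_le_mul (hζ (k + 1)) hd (norm_nonneg _) ((norm_nonneg _).trans (hζ 0))
    have hρd := mul_le_mul hwρ hd (norm_nonneg _) hρ
    simp only [gap]
    linarith
  have hβ0 : Tendsto β atTop (𝓝 0) := by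
    have := (Real.continuous_sqrt.tendsto 0).comp hβ2.tendsto_atTop_zero
    simpa [Function.comp_def, show ∀ k, √(β k ^ 2) = β k from fun k => Real.sqrt_sq (hx.pos k).le]
      using this
  have hC : 0 ≤ (ζ + ρ) * (ρ + 1) := by nlinarith [(norm_nonneg _).trans (hζ 0)]
  simpa [gap] using (tendsto_zero_of_summable_mul hgap (fun k => (hx.pos k).le) hβ0 hdiv hsum hC
    hup).add_const (f z + g z)

end IsProxSubgradSeq

end ProxSubgradientMethod

theorem pss_exogenous_weak_convergence_general
    {H : Type*} [NormedAddCommGroup H] [InnerProductSpace ℝ H] [CompleteSpace H]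
    (sf sg : Set H) (f g : H → ℝ)
    (hconvf : ConvexOn ℝ sf f) (hconvg : ConvexOn ℝ sg g)
    (hlscf : LowerSemicontinuousOn f sf) (hlscg : LowerSemicontinuousOn g sg)
    (hclg : IsClosed sg) (hdom : sg ⊆ sf)
    (A1 : ∀ V : Set H, V ⊆ sg → Bornology.IsBounded V → IsClosed V →
      ∃ ζ > 0, ∀ z ∈ V, ∀ uu : H, HasSubgradAt sf f uu z → ‖uu‖ ≤ ζ)
    (A2 : ∃ ρ ≥ (0:ℝ), ∀ z ∈ sg, ∃ ww : H, HasSubgradAt sg g ww z ∧ ‖ww‖ ≤ ρ)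
    (x u : ℕ → H) (β : ℕ → ℝ) (hβ : ∀ k, 0 < β k)
    (hβ2 : Summable (fun k => (β k)^2))
    (hβdiv : Filter.Tendsto (fun n => ∑ i ∈ Finset.range n, β i) Filter.atTop Filter.atTop)
    (hx0 : x 0 ∈ sg)
    (hu : ∀ k, HasSubgradAt sf f (u k) (x k))
    (hstep : ∀ k, IsProxPt sg g (β k / max 1 ‖u k‖)
      (x k - (β k / max 1 ‖u k‖) • u k) (x (k+1)))
    (xstar : H) (hstar : xstar ∈ SolSet sg f g) :
    Filter.Tendsto (fun k => f (x k) + g (x k)) Filter.atTop (nhds (f xstar + g xstar))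
    ∧ ∃ p ∈ SolSet sg f g, ∀ y : H,
        Filter.Tendsto (fun k => (inner ℝ (x k) y : ℝ)) Filter.atTop (nhds (inner ℝ p y : ℝ)) := by
  obtain ⟨ρ, hρ, hgρ⟩ := A2
  have hx : IsProxSubgradSeq sf sg f g β x u := ⟨hβ, hx0, hu, hstep⟩
  have hdiv : ¬Summable β := fun hs =>
    not_tendsto_nhds_of_tendsto_atTop hβdiv _ hs.tendsto_sum_tsum_nat
  have hdist {z} (hz : z ∈ SolSet sg f g) := hx.tendsto_norm_sub_sq hconvg hdom hgρ hρ hβ2 hz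
  obtain ⟨L, hL⟩ := hdist hstar
  have hbdd : IsBounded (Set.range x) := isBounded_range_of_tendsto_norm_sub_sq hL
  obtain ⟨ζ, -, hζ⟩ := A1 (closure (Set.range x))
    (closure_minimal (Set.range_subset_iff.2 hx.mem) hclg) hbdd.closure isClosed_closure
  have hobj := hx.tendsto_objective hconvg hdom hgρ hρ hβ2 hdiv
    (fun k => hζ _ (subset_closure ⟨k, rfl⟩) _ (hu k)) hstar
  refine ⟨hobj, exists_weakTendsto_of_tendsto_norm_sub_sq hbdd (fun z hz => hdist hz)
    fun U p hU hp => ?_⟩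
  exact mem_solSet_of_weakTendsto hconvf hconvg hlscf hlscg hclg hdom hp hx.mem hstar
    (hobj.mono_left hU)

theorem pss_exogenous_weak_convergence
    {H : Type*} [NormedAddCommGroup H] [InnerProductSpace ℝ H] [CompleteSpace H]
    (sf sg : Set H) (f g : H → ℝ)
    (hconvf : ConvexOn ℝ sf f) (hconvg : ConvexOn ℝ sg g)
    (hlscf : LowerSemicontinuousOn f sf) (hlscg : LowerSemicontinuousOn g sg)
    (hclg : IsClosed sg) (hdom : sg ⊆ sf) (hneg : sg.Nonempty)
    (A1 : ∀ V : Set H, V ⊆ sg → Bornology.IsBounded V → IsClosed V →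
      ∃ ζ > 0, ∀ z ∈ V, ∀ uu : H, HasSubgradAt sf f uu z → ‖uu‖ ≤ ζ)
    (A2 : ∃ ρ ≥ (0:ℝ), ∀ z ∈ sg, ∃ ww : H, HasSubgradAt sg g ww z ∧ ‖ww‖ ≤ ρ)
    (x u : ℕ → H) (β : ℕ → ℝ) (hβ : ∀ k, 0 < β k)
    (hβ2 : Summable (fun k => (β k)^2))
    (hβdiv : Filter.Tendsto (fun n => ∑ i ∈ Finset.range n, β i) Filter.atTop Filter.atTop)
    (hx0 : x 0 ∈ sg)
    (hu : ∀ k, HasSubgradAt sf f (u k) (x k))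
    (hstep : ∀ k, IsProxPt sg g (β k / max 1 ‖u k‖)
      (x k - (β k / max 1 ‖u k‖) • u k) (x (k+1)))
    (xstar : H) (hstar : xstar ∈ SolSet sg f g) :
    Filter.Tendsto (fun k => f (x k) + g (x k)) Filter.atTop (nhds (f xstar + g xstar))
    ∧ ∃ p ∈ SolSet sg f g, ∀ y : H,
        Filter.Tendsto (fun k => (inner ℝ (x k) y : ℝ)) Filter.atTop (nhds (inner ℝ p y : ℝ)) :=
  pss_exogenous_weak_convergence_general sf sg f g hconvf hconvg hlscf hlscg hclg hdom A1 A2 x u β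
    hβ hβ2 hβdiv hx0 hu hstep xstar hstar
end

section
/- Let (x^k) be generated by the proximal subgradient splitting method with exogenous stepsizes satisfying Σβ_k² < ∞ and Σβ_k = ∞, under A1 and A2. Then liminf_{k→∞} (f+g)(x^k) = inf_{x∈H} (f+g)(x) (possibly −∞). -/
open Filter Metric Finset Bornology
open scoped RealInnerProductSpace Topology

/-!
With `α k = β k / max 1 ‖u k‖` and `ρ` the bound of A2, one step satisfies, for every
`y ∈ dom g`,
`‖x (k+1) - y‖² ≤ ‖x k - y‖² - 2 α k ((f+g)(x k) - (f+g)(y)) + (1 + ρ)² β k²`.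
If the `liminf` exceeded the infimum, some `y ∈ dom g` would satisfy
`(f+g)(x k) ≥ (f+g)(y) + δ` for all large `k`. The distances `‖x k - y‖²` then decrease up to
the summable errors `β k²`, so the iterates are bounded; A1 bounds the subgradients `u k` along
them, hence `α k` is at least a fixed multiple of `β k`, and telescoping the inequality gives
`∑ β k < ∞`, contradicting the divergence of the stepsizes.
-/

theorem le_of_forall_mem_Ioc_le_add_mul {a b c : ℝ}
    (h : ∀ t ∈ Set.Ioc (0 : ℝ) 1, a ≤ b + t * c) : a ≤ b := by
  have hlim : Tendsto (fun t : ℝ => b + t * c) (𝓝[>] 0) (𝓝 b) := by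
    have : Continuous fun t : ℝ => b + t * c := by fun_prop
    simpa using (this.tendsto 0).mono_left nhdsWithin_le_nhds
  exact ge_of_tendsto hlim (eventually_of_mem (Ioc_mem_nhdsGT one_pos) h)

theorem le_add_tsum_of_le_sub_add {d a b : ℕ → ℝ} (hb : Summable b) (hb0 : ∀ k, 0 ≤ b k)
    (h : ∀ k, d (k + 1) ≤ d k - a k + b k) (n : ℕ) :
    d n + ∑ k ∈ range n, a k ≤ d 0 + ∑' k, b k := by
  have hpartial : d n + ∑ k ∈ range n, a k ≤ d 0 + ∑ k ∈ range n, b k := by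
    induction n with
    | zero => simp
    | succ n ih =>
      rw [sum_range_succ, sum_range_succ]
      linarith [h n]
  linarith [hb.sum_le_tsum (range n) fun k _ => hb0 k]

theorem exists_add_le_eventually_of_iInf_lt_liminf {ι : Type*} {s : Set ι} {F : ι → ℝ}
    {x : ℕ → ι} (h : ⨅ y ∈ s, (F y : EReal) < liminf (fun k => (F (x k) : EReal)) atTop) :
    ∃ y ∈ s, ∃ δ > 0, ∀ᶠ k in atTop, F y + δ ≤ F (x k) := by
  obtain ⟨c, hinf, hliminf⟩ := EReal.exists_between_coe_real h
  obtain ⟨y, hy, hyc⟩ : ∃ y ∈ s, (F y : EReal) < c := by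
    simpa only [iInf_lt_iff, exists_prop] using hinf
  refine ⟨y, hy, c - F y, sub_pos.2 (EReal.coe_lt_coe_iff.1 hyc), ?_⟩
  filter_upwards [eventually_lt_of_lt_liminf hliminf] with k hk
  linarith [EReal.coe_lt_coe_iff.1 hk]

section Subgradient

variable {H : Type*} [NormedAddCommGroup H] [InnerProductSpace ℝ H]

theorem HasSubgradAt.sub_le_inner {s : Set H} {h : H → ℝ} {w x y : H}
    (hw : HasSubgradAt s h w x) (hy : y ∈ s) : h x - h y ≤ ⟪w, x - y⟫ := by
  have := hw y hy
  rw [← neg_sub x y, inner_neg_right] at this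
  linarith

theorem HasSubgradAt.sub_le_mul_norm {s : Set H} {h : H → ℝ} {w x y : H} {ρ : ℝ}
    (hw : HasSubgradAt s h w x) (hwρ : ‖w‖ ≤ ρ) (hy : y ∈ s) : h x - h y ≤ ρ * ‖x - y‖ :=
  (hw.sub_le_inner hy).trans <| (real_inner_le_norm _ _).trans <|
    mul_le_mul_of_nonneg_right hwρ (norm_nonneg _)

theorem IsProxPt.inner_le {s : Set H} {g : H → ℝ} {α : ℝ} {z p y : H}
    (hp : IsProxPt s g α z p) (hg : ConvexOn ℝ s g) (hα : 0 < α) (hy : y ∈ s) :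
    ⟪z - p, y - p⟫ ≤ α * (g y - g p) := by
  -- compare `p` with `p + t • (y - p)`, divide by `t` and let `t → 0⁺`
  refine le_of_forall_mem_Ioc_le_add_mul (c := ‖y - p‖ ^ 2 / 2) fun t ⟨ht0, ht1⟩ => ?_
  have hcomb : (1 - t) • p + t • y = p + t • (y - p) := by module
  have hmem : p + t • (y - p) ∈ s := hcomb ▸ hg.1 hp.1 hy (by linarith) ht0.le (sub_add_cancel 1 t)
  have hconv : g (p + t • (y - p)) ≤ (1 - t) * g p + t * g y := by
    simpa only [hcomb, smul_eq_mul] using hg.2 hp.1 hy (by linarith) ht0.le (sub_add_cancel 1 t)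
  have hexp : ‖p + t • (y - p) - z‖ ^ 2
      = ‖p - z‖ ^ 2 - 2 * t * ⟪z - p, y - p⟫ + t ^ 2 * ‖y - p‖ ^ 2 := by
    rw [show p + t • (y - p) - z = t • (y - p) - (z - p) by module, norm_sub_sq_real,
      inner_smul_left, norm_smul, mul_pow, Real.norm_eq_abs, sq_abs, real_inner_comm]
    simp only [conj_trivial, norm_sub_rev z p]
    ring
  have hopt : t * (g p - g y) ≤ 1 / (2 * α) * (t ^ 2 * ‖y - p‖ ^ 2 - 2 * t * ⟪z - p, y - p⟫) := by
    linarith [hexp ▸ hp.2 _ hmem]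
  have hscaled : t * (2 * α * (g p - g y)) ≤ t * (t * ‖y - p‖ ^ 2 - 2 * ⟪z - p, y - p⟫) := by
    have := mul_le_mul_of_nonneg_left hopt (by positivity : (0 : ℝ) ≤ 2 * α)
    rw [one_div, mul_inv_cancel_left₀ (by positivity)] at this
    linarith
  linarith [le_of_mul_le_mul_left hscaled ht0]

theorem IsProxPt.norm_sub_sq_le {s t : Set H} {f g : H → ℝ} {a ρ : ℝ} {x u w p y : H}
    (hp : IsProxPt s g a (x - a • u) p) (hg : ConvexOn ℝ s g) (ha : 0 < a)
    (hu : HasSubgradAt t f u x) (hw : HasSubgradAt s g w x) (hwρ : ‖w‖ ≤ ρ)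
    (hy : y ∈ s) (hyt : y ∈ t) :
    ‖p - y‖ ^ 2 ≤ ‖x - y‖ ^ 2 - 2 * a * (f x + g x - (f y + g y)) + (a * (‖u‖ + ρ)) ^ 2 := by
  set z := x - a • u with hz
  have hρ : 0 ≤ ρ := (norm_nonneg _).trans hwρ
  have hprox : ⟪z - p, y - p⟫ ≤ a * (g y - g p) := hp.inner_le hg ha hy
  have hf : f x - f y ≤ ⟪u, x - y⟫ := hu.sub_le_inner hyt
  have hgp : g x - g p ≤ ρ * ‖x - p‖ := hw.sub_le_mul_norm hwρ hp.1
  have htri : ‖x - p‖ ≤ a * ‖u‖ + ‖z - p‖ := calc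
    ‖x - p‖ = ‖a • u + (z - p)‖ := by rw [hz]; congr 1; abel
    _ ≤ ‖a • u‖ + ‖z - p‖ := norm_add_le _ _
    _ = a * ‖u‖ + ‖z - p‖ := by rw [norm_smul, Real.norm_of_nonneg ha.le]
  have hzy : ‖z - y‖ ^ 2 = ‖x - y‖ ^ 2 - 2 * a * ⟪u, x - y⟫ + a ^ 2 * ‖u‖ ^ 2 := by
    rw [hz, show x - a • u - y = (x - y) - a • u by abel, norm_sub_sq_real, inner_smul_right,
      norm_smul, mul_pow, Real.norm_eq_abs, sq_abs, real_inner_comm]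
    ring
  have hpy : ‖z - y‖ ^ 2 = ‖z - p‖ ^ 2 - 2 * ⟪z - p, y - p⟫ + ‖p - y‖ ^ 2 := by
    rw [show z - y = (z - p) - (y - p) by abel, norm_sub_sq_real, norm_sub_rev y p]
  -- the `-‖z - p‖²` from the prox step absorbs the cross term `2aρ ‖z - p‖`
  have hamgm : 2 * (a * ρ) * ‖z - p‖ ≤ (a * ρ) ^ 2 + ‖z - p‖ ^ 2 := two_mul_le_add_sq _ _
  have hf' := mul_le_mul_of_nonneg_left hf ha.le
  have hgp' := mul_le_mul_of_nonneg_left (hgp.trans (mul_le_mul_of_nonneg_left htri hρ)) ha.le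
  linarith

end Subgradient

theorem div_max_one_mul_add_le {β r ρ : ℝ} (hβ : 0 ≤ β) (hρ : 0 ≤ ρ) :
    β / max 1 r * (r + ρ) ≤ (1 + ρ) * β := by
  have hm : 0 < max 1 r := lt_max_of_lt_left one_pos
  rw [div_mul_eq_mul_div, div_le_iff₀ hm]
  nlinarith [mul_nonneg hβ (sub_nonneg.2 (le_max_right 1 r)),
    mul_nonneg (mul_nonneg hβ hρ) (sub_nonneg.2 (le_max_left 1 r))]

section ProxSubgradient

variable {H : Type*} [NormedAddCommGroup H] [InnerProductSpace ℝ H]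
  {sf sg : Set H} {f g : H → ℝ} {x u : ℕ → H} {β : ℕ → ℝ} {ρ : ℝ}

theorem proxSubgrad_norm_sub_sq_le (hg : ConvexOn ℝ sg g) (hdom : sg ⊆ sf)
    (hA2 : ∀ z ∈ sg, ∃ w, HasSubgradAt sg g w z ∧ ‖w‖ ≤ ρ) (hβ : ∀ k, 0 < β k)
    (hmem : ∀ k, x k ∈ sg) (hu : ∀ k, HasSubgradAt sf f (u k) (x k))
    (hstep : ∀ k, IsProxPt sg g (β k / max 1 ‖u k‖)
      (x k - (β k / max 1 ‖u k‖) • u k) (x (k+1))) (k : ℕ) {y : H} (hy : y ∈ sg) :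
    ‖x (k + 1) - y‖ ^ 2 ≤ ‖x k - y‖ ^ 2
      - 2 * (β k / max 1 ‖u k‖) * (f (x k) + g (x k) - (f y + g y)) + (1 + ρ) ^ 2 * β k ^ 2 := by
  obtain ⟨w, hw, hwρ⟩ := hA2 _ (hmem k)
  have hα : 0 < β k / max 1 ‖u k‖ := div_pos (hβ k) (lt_max_of_lt_left one_pos)
  have hρ : 0 ≤ ρ := le_trans (norm_nonneg w) hwρ
  calc _ ≤ _ := (hstep k).norm_sub_sq_le hg hα (hu k) hw hwρ hy (hdom hy)
    _ ≤ _ := by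
      rw [← mul_pow]
      gcongr _ - _ + ?_ ^ 2
      exact div_max_one_mul_add_le (hβ k).le hρ

theorem summable_of_eventually_add_le (hclg : IsClosed sg)
    (A1 : ∀ V : Set H, V ⊆ sg → IsBounded V → IsClosed V →
      ∃ ζ > 0, ∀ z ∈ V, ∀ uu : H, HasSubgradAt sf f uu z → ‖uu‖ ≤ ζ)
    (hβ : ∀ k, 0 < β k) (hβ2 : Summable fun k => β k ^ 2)
    (hmem : ∀ k, x k ∈ sg) (hu : ∀ k, HasSubgradAt sf f (u k) (x k)) {y : H} {δ : ℝ}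
    (hδ : 0 < δ) (hgap : ∀ᶠ k in atTop, f y + g y + δ ≤ f (x k) + g (x k))
    (hdesc : ∀ k, ‖x (k + 1) - y‖ ^ 2 ≤ ‖x k - y‖ ^ 2
      - 2 * (β k / max 1 ‖u k‖) * (f (x k) + g (x k) - (f y + g y)) + (1 + ρ) ^ 2 * β k ^ 2) :
    Summable β := by
  obtain ⟨N, hN⟩ := eventually_atTop.1 hgap
  set a : ℕ → ℝ := fun k =>
    2 * (β (k + N) / max 1 ‖u (k + N)‖) * (f (x (k + N)) + g (x (k + N)) - (f y + g y))
  have ha0 : ∀ k, 0 ≤ a k := fun k => by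
    have := hN (k + N) le_add_self
    have := hβ (k + N)
    exact mul_nonneg (by positivity) (by linarith)
  have hb : Summable fun k => (1 + ρ) ^ 2 * β (k + N) ^ 2 :=
    ((summable_nat_add_iff N).2 hβ2).mul_left _
  set R := ‖x N - y‖ ^ 2 + ∑' k, (1 + ρ) ^ 2 * β (k + N) ^ 2
  have hbound : ∀ n, ‖x (n + N) - y‖ ^ 2 + ∑ k ∈ range n, a k ≤ R := fun n => by
    simpa only [zero_add] using le_add_tsum_of_le_sub_add hb (fun k => by positivity)
      (d := fun k => ‖x (k + N) - y‖ ^ 2)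
      (fun k => by simpa only [add_right_comm] using hdesc (k + N)) n
  have hball : ∀ k, x (k + N) ∈ sg ∩ closedBall y √R := fun k => by
    refine ⟨hmem _, ?_⟩
    rw [mem_closedBall, dist_eq_norm]
    refine Real.le_sqrt_of_sq_le ?_
    linarith [hbound k, sum_nonneg fun i (_ : i ∈ range k) => ha0 i]
  obtain ⟨ζ, -, hζ⟩ := A1 (sg ∩ closedBall y √R) Set.inter_subset_left
    (isBounded_closedBall.subset Set.inter_subset_right)
    (hclg.inter isClosed_closedBall)
  have ha : Summable a :=
    summable_of_sum_range_le (c := R) ha0 fun n => by linarith [hbound n, sq_nonneg ‖x (n + N) - y‖]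
  have hβa : ∀ k, β (k + N) ≤ max 1 ζ / (2 * δ) * a k := fun k => by
    have hm : 0 < max 1 ζ := lt_max_of_lt_left one_pos
    have hα : β (k + N) / max 1 ζ ≤ β (k + N) / max 1 ‖u (k + N)‖ :=
      div_le_div_of_nonneg_left (hβ _).le (lt_max_of_lt_left one_pos)
        (max_le_max le_rfl (hζ _ (hball k) _ (hu _)))
    have hgapk := hN (k + N) le_add_self
    calc β (k + N) = max 1 ζ / (2 * δ) * (2 * (β (k + N) / max 1 ζ) * δ) := by field_simp
      _ ≤ max 1 ζ / (2 * δ) * a k := by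
        gcongr
        exact mul_le_mul (by linarith) (by linarith) hδ.le (by have := hβ (k + N); positivity)
  exact (summable_nat_add_iff N).1 <|
    .of_nonneg_of_le (fun k => (hβ _).le) hβa (ha.mul_left _)

end ProxSubgradient

theorem pss_exogenous_liminf_inf_general
    {H : Type*} [NormedAddCommGroup H] [InnerProductSpace ℝ H]
    (sf sg : Set H) (f g : H → ℝ)
    (hconvg : ConvexOn ℝ sg g)
    (hclg : IsClosed sg) (hdom : sg ⊆ sf)
    (A1 : ∀ V : Set H, V ⊆ sg → Bornology.IsBounded V → IsClosed V →
      ∃ ζ > 0, ∀ z ∈ V, ∀ uu : H, HasSubgradAt sf f uu z → ‖uu‖ ≤ ζ)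
    (A2 : ∃ ρ ≥ (0:ℝ), ∀ z ∈ sg, ∃ ww : H, HasSubgradAt sg g ww z ∧ ‖ww‖ ≤ ρ)
    (x u : ℕ → H) (β : ℕ → ℝ) (hβ : ∀ k, 0 < β k)
    (hβ2 : Summable (fun k => (β k)^2))
    (hβdiv : Filter.Tendsto (fun n => ∑ i ∈ Finset.range n, β i) Filter.atTop Filter.atTop)
    (hx0 : x 0 ∈ sg)
    (hu : ∀ k, HasSubgradAt sf f (u k) (x k))
    (hstep : ∀ k, IsProxPt sg g (β k / max 1 ‖u k‖)
      (x k - (β k / max 1 ‖u k‖) • u k) (x (k+1))) :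
    Filter.liminf (fun k => ((f (x k) + g (x k) : ℝ) : EReal)) Filter.atTop
      = ⨅ y ∈ sg, ((f y + g y : ℝ) : EReal) := by
  obtain ⟨ρ, -, hA2⟩ := A2
  have hmem : ∀ k, x k ∈ sg
    | 0 => hx0
    | k + 1 => (hstep k).1
  refine le_antisymm ?_ <| le_liminf_of_le (by isBoundedDefault) <|
    .of_forall fun k => iInf₂_le (x k) (hmem k)
  by_contra hlt
  obtain ⟨y, hy, δ, hδ, hgap⟩ :=
    exists_add_le_eventually_of_iInf_lt_liminf (F := fun z => f z + g z) (not_le.1 hlt)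
  have hdesc k := proxSubgrad_norm_sub_sq_le hconvg hdom hA2 hβ hmem hu hstep k hy
  have hβsum := summable_of_eventually_add_le hclg A1 hβ hβ2 hmem hu hδ hgap hdesc
  exact (not_summable_iff_tendsto_nat_atTop_of_nonneg fun k => (hβ k).le).2 hβdiv hβsum

theorem pss_exogenous_liminf_inf
    {H : Type*} [NormedAddCommGroup H] [InnerProductSpace ℝ H] [CompleteSpace H]
    (sf sg : Set H) (f g : H → ℝ)
    (hconvf : ConvexOn ℝ sf f) (hconvg : ConvexOn ℝ sg g)
    (hlscf : LowerSemicontinuousOn f sf) (hlscg : LowerSemicontinuousOn g sg)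
    (hclg : IsClosed sg) (hdom : sg ⊆ sf) (hneg : sg.Nonempty)
    (A1 : ∀ V : Set H, V ⊆ sg → Bornology.IsBounded V → IsClosed V →
      ∃ ζ > 0, ∀ z ∈ V, ∀ uu : H, HasSubgradAt sf f uu z → ‖uu‖ ≤ ζ)
    (A2 : ∃ ρ ≥ (0:ℝ), ∀ z ∈ sg, ∃ ww : H, HasSubgradAt sg g ww z ∧ ‖ww‖ ≤ ρ)
    (x u : ℕ → H) (β : ℕ → ℝ) (hβ : ∀ k, 0 < β k)
    (hβ2 : Summable (fun k => (β k)^2))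
    (hβdiv : Filter.Tendsto (fun n => ∑ i ∈ Finset.range n, β i) Filter.atTop Filter.atTop)
    (hx0 : x 0 ∈ sg)
    (hu : ∀ k, HasSubgradAt sf f (u k) (x k))
    (hstep : ∀ k, IsProxPt sg g (β k / max 1 ‖u k‖)
      (x k - (β k / max 1 ‖u k‖) • u k) (x (k+1))) :
    Filter.liminf (fun k => ((f (x k) + g (x k) : ℝ) : EReal)) Filter.atTop
      = ⨅ y ∈ sg, ((f y + g y : ℝ) : EReal) :=
  pss_exogenous_liminf_inf_general sf sg f g hconvg hclg hdom A1 A2 x u β hβ hβ2 hβdiv hx0 hu hstep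
end
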